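/- arXiv:1807.08875 — 8 statements merged into one kernel-verified Lean document; each statement's English description precedes it below -/
import Mathlib

section
/- For positive integers d, r, s, the number of (s, s+r)-core partitions with d-distinct parts is finite if and only if gcd(s, r) ≤ d. -/
/-- A partition represented as a nonincreasing list of positive integers. -/
def IsPartitionList (L : List ℕ) : Prop :=
  L.Pairwise (· ≥ ·) ∧ ∀ p ∈ L, 0 < p

/-- The conjugate partition's `j`-th part. -/
def conjPart (L : List ℕ) (j : ℕ) : ℕ := (L.filter (fun p => j ≤ p)).length

/-- Hook length of the cell in row `i` (0-indexed) and column `j` (1-indexed). -/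
def hookLen (L : List ℕ) (i j : ℕ) : ℕ :=
  (L.getD i 0 - j) + (conjPart L j - (i + 1)) + 1

/-- A partition is `s`-core if no cell has hook length `s`. -/
def IsCore (L : List ℕ) (s : ℕ) : Prop :=
  ∀ i < L.length, ∀ j, 1 ≤ j → j ≤ L.getD i 0 → hookLen L i j ≠ s

/-- The β-set of `L = (λ₁, …, λ_k)`: the set `{λ_i + k − i : 1 ≤ i ≤ k}`. -/
def betaSet (L : List ℕ) : Finset ℕ :=
  (Finset.range L.length).image (fun i => L.getD i 0 + L.length - (i + 1))

/-- `L` has `d`-distinct parts: consecutive parts differ by at least `d`. -/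
def DDistinct (d : ℕ) (L : List ℕ) : Prop :=
  ∀ i, i + 1 < L.length → L.getD (i + 1) 0 + d ≤ L.getD i 0

/-- A finite set of naturals is `d`-th order twin-free:
any two distinct elements differ by more than `d`. -/
def TwinFree (d : ℕ) (β : Finset ℕ) : Prop :=
  ∀ x ∈ β, ∀ y ∈ β, x ≠ y → d < max x y - min x y

/-!
Hook lengths of a partition are the differences `b - c` with `b` in its β-set and `c < b`
outside it, so a partition is an `s`-core exactly when its β-set is closed under subtracting `s`.
The β-set of an `(s, s + r)`-core is therefore closed under subtracting every element of the
numerical semigroup generated by `s` and `s + r`, which contains all large multiples of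
`g = gcd(s, r)`. With `d`-distinct parts, distinct β-numbers differ by more than `d`; so if
`g ≤ d`, no β-number `x` is large: otherwise `x - m` and `x - m - g` would both be β-numbers
for a large multiple `m` of `g`. This bounds the length and the parts. If `g > d`, the
staircases with parts `(n - i)(g - 1)` have β-sets `{g - 1, 2g - 1, …, ng - 1}`, closed under
subtracting multiples of `g`: an infinite family.
-/

lemma lt_conjPart_iff {L : List ℕ} (hL : L.Pairwise (· ≥ ·)) (i j : ℕ) :
    i < conjPart L j ↔ i < L.length ∧ j ≤ L.getD i 0 := by
  induction L generalizing i with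
  | nil => simp [conjPart]
  | cons a L ih =>
    rw [List.pairwise_cons] at hL
    by_cases hja : j ≤ a
    · have hc : conjPart (a :: L) j = conjPart L j + 1 := by
        simp [conjPart, hja]
      cases i with
      | zero => simp [hc, hja]
      | succ i => simpa [hc] using ih hL.2 i
    · have hc : conjPart (a :: L) j = 0 := by
        simp only [conjPart, List.length_eq_zero_iff, List.filter_eq_nil_iff, List.mem_cons,
          decide_eq_true_eq, forall_eq_or_imp, not_le]
        exact ⟨by omega, fun x hx => (hL.1 x hx).trans_lt (by omega)⟩
      cases i with
      | zero => simpa [hc] using hja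
      | succ i =>
        simp only [hc, Nat.not_lt_zero, false_iff, not_and, not_le, List.length_cons,
          List.getD_cons_succ]
        intro hi
        have hi : i < L.length := by omega
        have := hL.1 _ (List.getElem_mem hi)
        rw [← List.getD_eq_getElem _ 0 hi] at this
        omega

lemma conjPart_le_length (L : List ℕ) (j : ℕ) : conjPart L j ≤ L.length :=
  List.length_filter_le _ _

lemma mem_betaSet {L : List ℕ} {x : ℕ} :
    x ∈ betaSet L ↔ ∃ i < L.length, L.getD i 0 + L.length - (i + 1) = x := by
  simp [betaSet]

/-- The numbers outside the β-set, one for each column (`notMem_betaSet_iff`): the hook length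
of the cell `(i, j + 1)` is `β_i - columnGap L j` (`hookLen_add_columnGap`). -/
def columnGap (L : List ℕ) (j : ℕ) : ℕ := j + L.length - conjPart L (j + 1)

lemma le_columnGap (L : List ℕ) (j : ℕ) : j ≤ columnGap L j := by
  have := conjPart_le_length L (j + 1)
  unfold columnGap
  omega

lemma columnGap_notMem_betaSet {L : List ℕ} (hL : L.Pairwise (· ≥ ·)) (j : ℕ) :
    columnGap L j ∉ betaSet L := by
  rintro h
  obtain ⟨i, hi, hx⟩ := mem_betaSet.1 h
  have := lt_conjPart_iff hL i (j + 1)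
  have := conjPart_le_length L (j + 1)
  unfold columnGap at hx
  omega

lemma mem_betaSet_of_columnGap_lt_of_lt {L : List ℕ} (hL : L.Pairwise (· ≥ ·)) {j c : ℕ}
    (h₁ : columnGap L j < c) (h₂ : c < columnGap L (j + 1)) : c ∈ betaSet L := by
  have := conjPart_le_length L (j + 1)
  have := conjPart_le_length L (j + 1 + 1)
  unfold columnGap at h₁ h₂
  -- the rows of length exactly `j + 1` fill the gap between the two columns
  have hlt := (lt_conjPart_iff hL (j + L.length - c) (j + 1)).1 (by omega)
  have hge := (lt_conjPart_iff hL (j + L.length - c) (j + 1 + 1)).not.1 (by omega)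
  exact mem_betaSet.2 ⟨j + L.length - c, hlt.1, by omega⟩

lemma columnGap_zero {L : List ℕ} (hL : IsPartitionList L) : columnGap L 0 = 0 := by
  have : conjPart L 1 = L.length := by
    rw [conjPart, List.filter_eq_self.2 fun p hp => decide_eq_true (show 1 ≤ p from hL.2 p hp)]
  simp [columnGap, this]

lemma notMem_betaSet_iff {L : List ℕ} (hL : IsPartitionList L) {y : ℕ} :
    y ∉ betaSet L ↔ ∃ j, columnGap L j = y := by
  refine ⟨fun hy => ?_, fun ⟨j, hj⟩ => hj ▸ columnGap_notMem_betaSet hL.1 j⟩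
  have key : ∀ j, y < columnGap L j → ∃ j' < j, columnGap L j' = y := by
    intro j
    induction j with
    | zero => simp [columnGap_zero hL]
    | succ j ih =>
      intro hlt
      rcases lt_trichotomy y (columnGap L j) with h | h | h
      · obtain ⟨j', hj', rfl⟩ := ih h
        exact ⟨j', by omega, rfl⟩
      · exact ⟨j, by omega, h.symm⟩
      · exact absurd (mem_betaSet_of_columnGap_lt_of_lt hL.1 h hlt) hy
  obtain ⟨j, -, hj⟩ := key (y + 1) ((Nat.lt_succ_self y).trans_le (le_columnGap L _))
  exact ⟨j, hj⟩

lemma lt_getD_of_columnGap_le {L : List ℕ} (hL : L.Pairwise (· ≥ ·)) {i j : ℕ}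
    (hi : i < L.length) (h : columnGap L j ≤ L.getD i 0 + L.length - (i + 1)) :
    j < L.getD i 0 := by
  by_contra! hj
  have := (lt_conjPart_iff hL i (j + 1)).not.2 (by omega)
  unfold columnGap at h
  omega

lemma hookLen_add_columnGap {L : List ℕ} (hL : L.Pairwise (· ≥ ·)) {i j : ℕ}
    (hi : i < L.length) (hj : j < L.getD i 0) :
    hookLen L i (j + 1) + columnGap L j = L.getD i 0 + L.length - (i + 1) := by
  have := (lt_conjPart_iff hL i (j + 1)).2 ⟨hi, hj⟩
  have := conjPart_le_length L (j + 1)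
  unfold hookLen columnGap
  omega

def subtractionStable (B : Finset ℕ) : AddSubmonoid ℕ where
  carrier := {n | ∀ x ∈ B, n ≤ x → x - n ∈ B}
  zero_mem' := by simp
  add_mem' {a b} ha hb x hx hab := by
    simpa [Nat.sub_add_eq] using hb (x - a) (ha x hx (by omega)) (by omega)

theorem isCore_iff_mem_subtractionStable {L : List ℕ} (hL : IsPartitionList L) {s : ℕ} :
    IsCore L s ↔ s ∈ subtractionStable (betaSet L) := by
  constructor
  · intro hcore x hx hsx
    obtain ⟨i, hi, rfl⟩ := mem_betaSet.1 hx
    by_contra hgap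
    obtain ⟨j, hj⟩ := (notMem_betaSet_iff hL).1 hgap
    have hjlt := lt_getD_of_columnGap_le hL.1 hi (j := j) (by omega)
    have := hookLen_add_columnGap hL.1 hi hjlt
    exact hcore i hi (j + 1) (by omega) hjlt (by omega)
  · rintro hs i hi (_ | j) hj₁ hj₂ rfl
    · omega
    · have := hookLen_add_columnGap hL.1 hi hj₂
      refine columnGap_notMem_betaSet hL.1 j ?_
      convert hs _ (mem_betaSet.2 ⟨i, hi, rfl⟩) (by omega) using 1
      omega

lemma getD_le_getD {L : List ℕ} (hL : L.Pairwise (· ≥ ·)) {i i' : ℕ} (h : i ≤ i')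
    (hi' : i' < L.length) : L.getD i' 0 ≤ L.getD i 0 := by
  rcases h.eq_or_lt with rfl | h
  · rfl
  · rw [List.getD_eq_getElem _ _ hi', List.getD_eq_getElem _ _ (h.trans hi')]
    exact List.pairwise_iff_getElem.1 hL _ _ _ _ h

theorem DDistinct.twinFree_betaSet {d : ℕ} {L : List ℕ} (hL : L.Pairwise (· ≥ ·))
    (h : DDistinct d L) : TwinFree d (betaSet L) := by
  have gap : ∀ i i', i < i' → i' < L.length →
      L.getD i' 0 + L.length - (i' + 1) + d < L.getD i 0 + L.length - (i + 1) := by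
    intro i i' hii' hi'
    have := getD_le_getD hL (i := i + 1) hii' hi'
    have := h i (by omega)
    omega
  intro x hx y hy hxy
  obtain ⟨i, hi, rfl⟩ := mem_betaSet.1 hx
  obtain ⟨i', hi', rfl⟩ := mem_betaSet.1 hy
  rcases lt_trichotomy i i' with hii' | rfl | hii'
  · have := gap i i' hii' hi'
    omega
  · exact absurd rfl hxy
  · have := gap i' i hii' hi
    omega

theorem exists_forall_gcd_dvd_mem_closure_pair (s t : ℕ) :
    ∃ N, ∀ m ≥ N, Nat.gcd s t ∣ m → m ∈ AddSubmonoid.closure {s, t} := by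
  obtain ⟨N, hN⟩ := Nat.exists_mem_closure_of_ge {s, t}
  have : Nat.setGcd {s, t} ∣ Nat.gcd s t :=
    Nat.dvd_gcd (Nat.setGcd_dvd_of_mem (by simp)) (Nat.setGcd_dvd_of_mem (by simp))
  exact ⟨N, fun m hm hdvd => hN m hm (this.trans hdvd)⟩

theorem TwinFree.lt_of_mem_subtractionStable {d g a : ℕ} {B : Finset ℕ} (hB : TwinFree d B)
    (hg : 0 < g) (hgd : g ≤ d) (ha : a ∈ subtractionStable B)
    (hag : a + g ∈ subtractionStable B) : ∀ x ∈ B, x < a + g := by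
  intro x hx
  by_contra! hle
  have := hB _ (ha x hx (by omega)) _ (hag x hx hle) (by omega)
  omega

theorem exists_bound_of_twinFree {s t d : ℕ} (hg : 0 < Nat.gcd s t) (hgd : Nat.gcd s t ≤ d) :
    ∃ C, ∀ B : Finset ℕ, TwinFree d B → s ∈ subtractionStable B → t ∈ subtractionStable B →
      ∀ x ∈ B, x < C := by
  obtain ⟨N, hN⟩ := exists_forall_gcd_dvd_mem_closure_pair s t
  refine ⟨N * Nat.gcd s t + Nat.gcd s t, fun B hB hs ht => ?_⟩
  have hclosure := AddSubmonoid.closure_le.2 (Set.pair_subset hs ht)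
  refine hB.lt_of_mem_subtractionStable hg hgd (hclosure (hN _ ?_ (dvd_mul_left _ _)))
    (hclosure (hN _ ?_ ((dvd_mul_left _ _).add dvd_rfl)))
  · exact Nat.le_mul_of_pos_right N hg
  · exact (Nat.le_mul_of_pos_right N hg).trans (Nat.le_add_right _ _)

theorem finite_setOf_forall_mem_betaSet_lt (C : ℕ) :
    {L | IsPartitionList L ∧ ∀ x ∈ betaSet L, x < C}.Finite := by
  refine ((List.finite_length_le (Fin C) C).image (List.map Fin.val)).subset ?_
  rintro (_ | ⟨a, l⟩) ⟨hL, hC⟩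
  · exact ⟨[], by simp, rfl⟩
  have ha : a + l.length < C := by
    simpa using hC _ (mem_betaSet.2 ⟨0, by simp, rfl⟩)
  have hlt : ∀ x ∈ a :: l, x < C := by
    simp only [List.mem_cons, forall_eq_or_imp]
    exact ⟨by omega, fun x hx => by have := (List.pairwise_cons.1 hL.1).1 x hx; omega⟩
  exact ⟨(a :: l).pmap Fin.mk hlt, by simp; omega, by simp [List.map_pmap]⟩

def stairs (g n : ℕ) : List ℕ := (List.range n).map fun i => (n - i) * (g - 1)

@[simp]
lemma length_stairs (g n : ℕ) : (stairs g n).length = n := by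
  simp [stairs]

lemma getD_stairs {g n i : ℕ} (hi : i < n) : (stairs g n).getD i 0 = (n - i) * (g - 1) := by
  simp [stairs, hi]

lemma isPartitionList_stairs {g : ℕ} (hg : 1 < g) (n : ℕ) : IsPartitionList (stairs g n) := by
  refine ⟨?_, ?_⟩
  · refine List.pairwise_map.2 (List.pairwise_lt_range.imp fun hij => ?_)
    exact Nat.mul_le_mul_right _ (by omega)
  · simp only [stairs, List.mem_map, List.mem_range]
    rintro _ ⟨i, hi, rfl⟩
    exact Nat.mul_pos (by omega) (by omega)

lemma dDistinct_stairs {d g : ℕ} (hdg : d < g) (n : ℕ) : DDistinct d (stairs g n) := by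
  intro i hi
  rw [length_stairs] at hi
  rw [getD_stairs hi, getD_stairs (by omega : i < n), show n - i = n - (i + 1) + 1 by omega,
    add_one_mul]
  omega

lemma mem_betaSet_stairs {g n x : ℕ} (hg : 0 < g) :
    x ∈ betaSet (stairs g n) ↔ g ∣ x + 1 ∧ x + 1 ≤ n * g := by
  have beta : ∀ i < n, (stairs g n).getD i 0 + n - (i + 1) + 1 = (n - i) * g := by
    intro i hi
    rw [getD_stairs hi, show (n - i) * g = (n - i) * (g - 1) + (n - i) by
      rw [← Nat.mul_add_one, Nat.sub_add_cancel hg]]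
    omega
  simp only [mem_betaSet, length_stairs]
  constructor
  · rintro ⟨i, hi, rfl⟩
    rw [beta i hi]
    exact ⟨dvd_mul_left _ _, Nat.mul_le_mul_right _ (Nat.sub_le _ _)⟩
  · rintro ⟨⟨c, hc⟩, hle⟩
    have hcn : c ≤ n := by nlinarith
    have hc0 : 0 < c := by nlinarith
    refine ⟨n - c, by omega, ?_⟩
    have := beta (n - c) (by omega)
    rw [Nat.sub_sub_self hcn, mul_comm, ← hc] at this
    omega

lemma isCore_stairs {g s : ℕ} (hg : 1 < g) (hs : g ∣ s) (n : ℕ) : IsCore (stairs g n) s := by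
  rw [isCore_iff_mem_subtractionStable (isPartitionList_stairs hg n)]
  intro x hx hsx
  rw [mem_betaSet_stairs (by omega)] at hx ⊢
  exact ⟨by rw [← Nat.sub_add_comm hsx]; exact Nat.dvd_sub hx.1 hs, by omega⟩

theorem finite_iff_gcd_le_general (d r s : ℕ) (hd : 0 < d) (hs : 0 < s) :
    {L : List ℕ | IsPartitionList L ∧ IsCore L s ∧ IsCore L (s + r) ∧
      DDistinct d L}.Finite ↔ Nat.gcd s r ≤ d := by
  have hgcd : Nat.gcd s (s + r) = Nat.gcd s r := Nat.gcd_self_add_right s r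
  constructor
  · intro hfin
    by_contra! hdg
    have hg : 1 < Nat.gcd s r := by omega
    refine hfin.not_infinite (Set.infinite_of_injective_forall_mem
      (f := stairs (Nat.gcd s r)) (fun m n h => by simpa using congrArg List.length h) fun n => ?_)
    exact ⟨isPartitionList_stairs hg n, isCore_stairs hg (Nat.gcd_dvd_left s r) n,
      isCore_stairs hg (hgcd ▸ Nat.gcd_dvd_right s (s + r)) n, dDistinct_stairs hdg n⟩
  · intro hgd
    obtain ⟨C, hC⟩ := exists_bound_of_twinFree (s := s) (t := s + r) (d := d)
      (hgcd ▸ Nat.gcd_pos_of_pos_left r hs) (hgcd ▸ hgd)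
    refine (finite_setOf_forall_mem_betaSet_lt C).subset ?_
    rintro L ⟨hL, hsL, htL, hdL⟩
    exact ⟨hL, hC _ (hdL.twinFree_betaSet hL.1) ((isCore_iff_mem_subtractionStable hL).1 hsL)
      ((isCore_iff_mem_subtractionStable hL).1 htL)⟩

theorem finite_iff_gcd_le (d r s : ℕ) (hd : 0 < d) (hr : 0 < r) (hs : 0 < s) :
    {L : List ℕ | IsPartitionList L ∧ IsCore L s ∧ IsCore L (s + r) ∧
      DDistinct d L}.Finite ↔ Nat.gcd s r ≤ d :=
  finite_iff_gcd_le_general d r s hd hs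
end

section
/- For positive integers r ≤ d and s, every finite subset β of the positive integers satisfying: (1) x ∈ β and x ≥ s implies x − s ∈ β, (2) x ∈ β and x ≥ s + r implies x − (s+r) ∈ β, and (3) β is d-th order twin-free, is contained in {1, 2, ..., s+r−1} \ {s}. -/
instance (d : ℕ) : DecidablePred (TwinFree d) := fun β => by
  unfold TwinFree; infer_instance

theorem beta_subset_bound (d r s : ℕ) (hr : 0 < r) (hrd : r ≤ d) (hs : 0 < s)
    (β : Finset ℕ) (hpos : ∀ x ∈ β, 0 < x)
    (h1 : ∀ x ∈ β, s ≤ x → x - s ∈ β)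
    (h2 : ∀ x ∈ β, s + r ≤ x → x - (s + r) ∈ β)
    (h3 : TwinFree d β) :
    β ⊆ (Finset.Icc 1 (s + r - 1)).erase s := by
  intro x hx
  have hxpos := hpos x hx
  have hxs : x ≠ s := by
    rintro rfl
    have := hpos _ (h1 x hx le_rfl)
    simp at this
  have hxlt : x < s + r := by
    by_contra hge
    push_neg at hge
    have hy : x - s ∈ β := h1 x hx (by omega)
    have hz : x - (s + r) ∈ β := h2 x hx hge
    have hne : x - s ≠ x - (s + r) := by omega
    have := h3 _ hy _ hz hne
    omega
  simp only [Finset.mem_erase, Finset.mem_Icc]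
  omega
end

section
/- For positive integers r ≤ d, let N_{d,r}(s) denote the number of d-th order twin-free finite subsets β of {1,...,s+r−1} such that x ∈ β, x ≥ s implies x−s ∈ β, and x ∈ β, x ≥ s+r implies x−(s+r) ∈ β. Then N_{d,r}(s) = N_{d,1}(s) for 1 ≤ s ≤ d, and N_{d,r}(s) = N_{d,1}(s) + (r−1)·N_{d,1}(s−2d) for s ≥ d+1, where N_{d,1}(t) is interpreted as 1 for t ≤ 0. -/
/-- `N d r s`: the number of `d`-th order twin-free subsets `β` of `{1, …, s+r−1}`
such that `x ∈ β, x ≥ s → x − s ∈ β` and `x ∈ β, x ≥ s+r → x − (s+r) ∈ β`. -/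
def N (d r s : ℕ) : ℕ :=
  ((Finset.Icc 1 (s + r - 1)).powerset.filter
    (fun β => TwinFree d β ∧ (∀ x ∈ β, s ≤ x → x - s ∈ β) ∧
      (∀ x ∈ β, s + r ≤ x → x - (s + r) ∈ β))).card


/-- `N1 d t = N_{d,1}(t)`: the number of `d`-th order twin-free subsets of `{1, …, t−1}`. -/
def N1 (d t : ℕ) : ℕ := ((Finset.Icc 1 (t - 1)).powerset.filter (TwinFree d)).card

/-- Extension of `N_{d,1}` to integer arguments, with value `1` for `t ≤ 0`. -/
def N1ext (d : ℕ) (t : ℤ) : ℕ := if t ≤ 0 then 1 else N1 d t.toNat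

open Finset in
lemma mem_N_iff (d r s : ℕ) (β : Finset ℕ) :
    β ∈ (Finset.Icc 1 (s + r - 1)).powerset.filter
      (fun β => TwinFree d β ∧ (∀ x ∈ β, s ≤ x → x - s ∈ β) ∧
        (∀ x ∈ β, s + r ≤ x → x - (s + r) ∈ β)) ↔
    β ⊆ Finset.Icc 1 (s + r - 1) ∧ TwinFree d β ∧ (∀ x ∈ β, s ≤ x → x - s ∈ β) := by
  rw [Finset.mem_filter, Finset.mem_powerset]
  constructor
  · rintro ⟨h1, h2, h3, _⟩; exact ⟨h1, h2, h3⟩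
  · rintro ⟨h1, h2, h3⟩
    refine ⟨h1, h2, h3, fun x hx hsx => absurd (h1 hx) ?_⟩
    simp only [Finset.mem_Icc]; omega

lemma s_not_mem {r s : ℕ} {β : Finset ℕ} (hsub : β ⊆ Finset.Icc 1 (s + r - 1))
    (hcl : ∀ x ∈ β, s ≤ x → x - s ∈ β) : s ∉ β := by
  intro hsβ
  have h0 : (0 : ℕ) ∈ β := by
    have := hcl s hsβ le_rfl
    simpa using this
  have := hsub h0
  simp at this

/-- structure of an element above `s` -/
lemma struct_above {d r s : ℕ} (hr : 0 < r) (hrd : r ≤ d) {β : Finset ℕ}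
    (hsub : β ⊆ Finset.Icc 1 (s + r - 1)) (htf : TwinFree d β)
    (hcl : ∀ x ∈ β, s ≤ x → x - s ∈ β) {x : ℕ} (hx : x ∈ β) (hxs : s < x) :
    x - s ∈ β ∧ x ≤ s + r - 1 ∧
    (∀ y ∈ β, y ≠ x - s → y ≠ x → (x - s) + d + 1 ≤ y ∧ y + d + 1 ≤ x) := by
  have hxle : x ≤ s + r - 1 := by have := hsub hx; simp only [Finset.mem_Icc] at this; omega
  have hk : x - s ∈ β := hcl x hx hxs.le
  refine ⟨hk, hxle, fun y hy hyk hyx => ?_⟩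
  have hyle : y ≤ s + r - 1 := by have := hsub hy; simp only [Finset.mem_Icc] at this; omega
  have hy1 : 1 ≤ y := by have := hsub hy; simp only [Finset.mem_Icc] at this; omega
  have hys : y ∉ Set.Ici s ∨ True := Or.inr trivial
  -- y is not > s (uniqueness), and y ≠ s
  have hyltx : y < s := by
    rcases lt_or_ge y s with h | h
    · exact h
    rcases eq_or_lt_of_le h with rfl | h'
    · exact absurd hy (s_not_mem hsub hcl)
    · have := htf x hx y hy (Ne.symm hyx)
      omega
  have h1 := htf x hx y hy (Ne.symm hyx)
  have h2 := htf (x - s) hk y hy (Ne.symm hyk)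
  omega

open Finset in
lemma part1 (d r s : ℕ) (hr : 0 < r) (hrd : r ≤ d) (hs1 : 1 ≤ s) (hsd : s ≤ d) :
    N d r s = N1 d s := by
  unfold N N1
  congr 1
  ext β
  rw [mem_N_iff, Finset.mem_filter, Finset.mem_powerset]
  constructor
  · rintro ⟨hsub, htf, hcl⟩
    refine ⟨fun x hx => ?_, htf⟩
    have hx1 := hsub hx
    simp only [Finset.mem_Icc] at hx1 ⊢
    refine ⟨hx1.1, ?_⟩
    by_contra hgt
    have hxs : s ≤ x := by omega
    rcases eq_or_lt_of_le hxs with rfl | hlt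
    · exact s_not_mem hsub hcl hx
    · obtain ⟨hk, -, -⟩ := struct_above hr hrd hsub htf hcl hx hlt
      have hne : x - s ≠ x := by omega
      have := htf (x - s) hk x hx hne
      omega
  · rintro ⟨hsub, htf⟩
    refine ⟨hsub.trans (Finset.Icc_subset_Icc le_rfl (by omega)), htf, fun x hx hxs => ?_⟩
    have := hsub hx
    simp only [Finset.mem_Icc] at this
    omega


open Finset in
lemma uniq_above {d r s : ℕ} (hr : 0 < r) (hrd : r ≤ d) (hs : d + 1 ≤ s) {β : Finset ℕ}
    (hsub : β ⊆ Finset.Icc 1 (s + r - 1)) (htf : TwinFree d β)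
    (hcl : ∀ x ∈ β, s ≤ x → x - s ∈ β) {x y : ℕ} (hx : x ∈ β) (hxs : s < x)
    (hy : y ∈ β) (hys : s < y) : y = x := by
  by_contra hne
  obtain ⟨hk, hxle, hmain⟩ := struct_above hr hrd hsub htf hcl hx hxs
  have hyk : y ≠ x - s := by omega
  obtain ⟨h1, h2⟩ := hmain y hy hyk hne
  omega

open Finset in
lemma part2 (d r s : ℕ) (hr : 0 < r) (hrd : r ≤ d) (hs : d + 1 ≤ s) :
    N d r s = N1 d s + (r - 1) * N1 d (s - 2 * d) := by
  classical
  set S := (Finset.Icc 1 (s + r - 1)).powerset.filter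
    (fun β => TwinFree d β ∧ (∀ x ∈ β, s ≤ x → x - s ∈ β) ∧
      (∀ x ∈ β, s + r ≤ x → x - (s + r) ∈ β)) with hS
  have hmemS : ∀ β, β ∈ S ↔ β ⊆ Finset.Icc 1 (s + r - 1) ∧ TwinFree d β ∧
      (∀ x ∈ β, s ≤ x → x - s ∈ β) := fun β => mem_N_iff d r s β
  set key : Finset ℕ → ℕ := fun β => ((β.filter (fun y => s < y)).sup (fun y => y - s))
    with hkeydef
  -- key is < r on S
  have hkey_lt : ∀ β ∈ S, key β ∈ Finset.range r := by
    intro β hβ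
    obtain ⟨hsub, htf, hcl⟩ := (hmemS β).1 hβ
    simp only [Finset.mem_range, hkeydef]
    have hb : (⊥ : ℕ) < r := hr
    rw [Finset.sup_lt_iff hb]
    intro y hy
    simp only [Finset.mem_filter] at hy
    have := hsub hy.1
    simp only [Finset.mem_Icc] at this
    omega
  have hcards : N d r s = ∑ k ∈ Finset.range r, (S.filter (fun β => key β = k)).card := by
    have : N d r s = S.card := rfl
    rw [this]
    exact Finset.card_eq_sum_card_fiberwise hkey_lt
  -- fiber 0
  have hfib0 : S.filter (fun β => key β = 0) = (Finset.Icc 1 (s - 1)).powerset.filter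
      (TwinFree d) := by
    ext β
    simp only [Finset.mem_filter, Finset.mem_powerset]
    constructor
    · rintro ⟨hβ, hk0⟩
      obtain ⟨hsub, htf, hcl⟩ := (hmemS β).1 hβ
      refine ⟨fun x hx => ?_, htf⟩
      have hx1 := hsub hx
      simp only [Finset.mem_Icc] at hx1 ⊢
      refine ⟨hx1.1, ?_⟩
      have hxns : x ≠ s := fun h => s_not_mem hsub hcl (h ▸ hx)
      by_contra hgt
      have hxgt : s < x := by omega
      have hle : x - s ≤ key β := Finset.le_sup (f := fun y => y - s)
        (Finset.mem_filter.2 ⟨hx, hxgt⟩)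
      rw [hk0] at hle
      omega
    · rintro ⟨hsub, htf⟩
      have hβS : β ∈ S := by
        rw [hmemS]
        refine ⟨hsub.trans (Finset.Icc_subset_Icc le_rfl (by omega)), htf, fun x hx hxs => ?_⟩
        have := hsub hx
        simp only [Finset.mem_Icc] at this
        omega
      refine ⟨hβS, ?_⟩
      have : β.filter (fun y => s < y) = ∅ := by
        apply Finset.filter_eq_empty_iff.2
        intro x hx
        have := hsub hx
        simp only [Finset.mem_Icc] at this
        omega
      simp only [hkeydef, this, Finset.sup_empty]
      rfl
  -- fiber k for 1 ≤ k < r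
  have hfibk : ∀ k, 1 ≤ k → k < r →
      (S.filter (fun β => key β = k)).card = N1 d (s - 2 * d) := by
    intro k hk1 hkr
    set g : Finset ℕ → Finset ℕ :=
      fun γ => insert k (insert (s + k) (γ.image (fun y => y + (k + d)))) with hgdef
    have hmemg : ∀ γ z, z ∈ g γ ↔ z = k ∨ z = s + k ∨ ∃ y ∈ γ, y + (k + d) = z := by
      intro γ z
      simp only [hgdef, Finset.mem_insert, Finset.mem_image]
    have himg : S.filter (fun β => key β = k) =
        ((Finset.Icc 1 (s - 2 * d - 1)).powerset.filter (TwinFree d)).image g := by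
      ext β
      simp only [Finset.mem_filter, Finset.mem_image, Finset.mem_powerset]
      constructor
      · rintro ⟨hβ, hkey⟩
        obtain ⟨hsub, htf, hcl⟩ := (hmemS β).1 hβ
        -- the element above s exists
        have hkey2 : (β.filter (fun y => s < y)).sup (fun y => y - s) = k := hkey
        have hne : (β.filter (fun y => s < y)).Nonempty := by
          rw [Finset.nonempty_iff_ne_empty]
          intro h
          rw [h, Finset.sup_empty] at hkey2
          simp only [Nat.bot_eq_zero] at hkey2
          omega
        obtain ⟨x, hxf⟩ := hne
        have hxβ : x ∈ β := (Finset.mem_filter.1 hxf).1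
        have hxs : s < x := (Finset.mem_filter.1 hxf).2
        -- key β = x - s, so x = s + k
        have hxk : x = s + k := by
          have hle : x - s ≤ key β := Finset.le_sup (f := fun y => y - s) hxf
          obtain ⟨x', hx'f, hx'⟩ := Finset.exists_mem_eq_sup _ ⟨x, hxf⟩ (fun y => y - s)
          have hx'β : x' ∈ β := (Finset.mem_filter.1 hx'f).1
          have hx's : s < x' := (Finset.mem_filter.1 hx'f).2
          have := uniq_above hr hrd hs hsub htf hcl hxβ hxs hx'β hx's
          omega
        subst hxk
        obtain ⟨hkβ, hxle, hmain⟩ := struct_above hr hrd hsub htf hcl hxβ hxs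
        rw [Nat.add_sub_cancel_left] at hkβ hmain
        refine ⟨(β.erase k |>.erase (s + k)).image (fun y => y - (k + d)), ⟨?_, ?_⟩, ?_⟩
        · -- subset of Icc 1 (s - 2d - 1)
          intro z hz
          simp only [Finset.mem_image, Finset.mem_erase] at hz
          obtain ⟨y, ⟨hysk, hyk, hyβ⟩, rfl⟩ := hz
          obtain ⟨h1, h2⟩ := hmain y hyβ hyk hysk
          simp only [Finset.mem_Icc]
          omega
        · -- twin-free
          intro a ha b hb hab
          simp only [Finset.mem_image, Finset.mem_erase] at ha hb
          obtain ⟨y1, ⟨hy1sk, hy1k, hy1β⟩, rfl⟩ := ha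
          obtain ⟨y2, ⟨hy2sk, hy2k, hy2β⟩, rfl⟩ := hb
          obtain ⟨h11, h12⟩ := hmain y1 hy1β hy1k hy1sk
          obtain ⟨h21, h22⟩ := hmain y2 hy2β hy2k hy2sk
          have hy12 : y1 ≠ y2 := by omega
          have := htf y1 hy1β y2 hy2β hy12
          omega
        · -- g γ = β
          ext z
          rw [hmemg]
          simp only [Finset.mem_image, Finset.mem_erase]
          constructor
          · rintro (rfl | rfl | ⟨y, ⟨w, ⟨hwsk, hwk, hwβ⟩, rfl⟩, rfl⟩)
            · exact hkβ
            · exact hxβ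
            · obtain ⟨h1, h2⟩ := hmain w hwβ hwk hwsk
              have : w - (k + d) + (k + d) = w := by omega
              rw [this]; exact hwβ
          · intro hz
            rcases eq_or_ne z k with rfl | hzk
            · exact Or.inl rfl
            rcases eq_or_ne z (s + k) with rfl | hzsk
            · exact Or.inr (Or.inl rfl)
            refine Or.inr (Or.inr ⟨z - (k + d), ⟨z, ⟨hzsk, hzk, hz⟩, rfl⟩, ?_⟩)
            obtain ⟨h1, h2⟩ := hmain z hz hzk hzsk
            omega
      · rintro ⟨γ, ⟨hγsub, hγtf⟩, rfl⟩
        have hγb : ∀ y ∈ γ, 1 ≤ y ∧ y ≤ s - 2 * d - 1 := by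
          intro y hy
          have := hγsub hy
          simpa only [Finset.mem_Icc] using this
        have hβS : g γ ∈ S := by
          rw [hmemS]
          refine ⟨?_, ?_, ?_⟩
          · intro z hz
            rw [hmemg] at hz
            simp only [Finset.mem_Icc]
            rcases hz with rfl | rfl | ⟨y, hy, rfl⟩
            · omega
            · omega
            · have := hγb y hy; omega
          · intro z1 h1 z2 h2 hne
            rw [hmemg] at h1 h2
            rcases h1 with rfl | rfl | ⟨y1, hy1, rfl⟩ <;>
              rcases h2 with rfl | rfl | ⟨y2, hy2, rfl⟩
            · omega
            · omega
            · have := hγb y2 hy2; omega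
            · omega
            · omega
            · have := hγb y2 hy2; omega
            · have := hγb y1 hy1; omega
            · have := hγb y1 hy1; omega
            · have hb1 := hγb y1 hy1
              have hb2 := hγb y2 hy2
              have hne' : y1 ≠ y2 := by omega
              have := hγtf y1 hy1 y2 hy2 hne'
              omega
          · intro z hz hsz
            rw [hmemg] at hz
            rcases hz with rfl | rfl | ⟨y, hy, rfl⟩
            · omega
            · rw [Nat.add_sub_cancel_left, hmemg]
              exact Or.inl rfl
            · have := hγb y hy; omega
        refine ⟨hβS, ?_⟩
        have hfil : (g γ).filter (fun y => s < y) = {s + k} := by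
          apply Finset.eq_singleton_iff_unique_mem.2
          constructor
          · refine Finset.mem_filter.2 ⟨?_, by omega⟩
            rw [hmemg]; exact Or.inr (Or.inl rfl)
          · intro z hz
            obtain ⟨hzg, hzs⟩ := Finset.mem_filter.1 hz
            rw [hmemg] at hzg
            rcases hzg with rfl | rfl | ⟨y, hy, rfl⟩
            · omega
            · rfl
            · have := hγb y hy; omega
        show (Finset.filter (fun y => s < y) (g γ)).sup (fun y => y - s) = k
        rw [hfil, Finset.sup_singleton]
        omega
    rw [himg, Finset.card_image_of_injOn]
    · rfl
    · -- injectivity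
      intro γ1 h1 γ2 h2 heq
      simp only [Finset.coe_filter, Set.mem_setOf_eq, Finset.mem_powerset] at h1 h2
      have hkey' : ∀ γ1 γ2 : Finset ℕ, γ1 ⊆ Finset.Icc 1 (s - 2 * d - 1) →
          g γ1 = g γ2 → γ1 ⊆ γ2 := by
        intro γ1 γ2 hsub1 heq y hy
        have hb := hsub1 hy
        simp only [Finset.mem_Icc] at hb
        have : y + (k + d) ∈ g γ2 := by
          rw [← heq, hmemg]
          exact Or.inr (Or.inr ⟨y, hy, rfl⟩)
        rw [hmemg] at this
        rcases this with h | h | ⟨w, hw, hww⟩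
        · omega
        · omega
        · have : w = y := by omega
          rwa [← this]
      exact Finset.Subset.antisymm (hkey' γ1 γ2 h1.1 heq) (hkey' γ2 γ1 h2.1 heq.symm)
  -- assemble
  rw [hcards]
  rw [Finset.range_eq_Ico, ← Finset.sum_Ico_consecutive _ (Nat.zero_le 1) (by omega : 1 ≤ r)]
  have h0 : ∑ k ∈ Finset.Ico 0 1, (S.filter (fun β => key β = k)).card = N1 d s := by
    rw [show Finset.Ico 0 1 = {0} from rfl, Finset.sum_singleton, hfib0]
    rfl
  have h1 : ∑ k ∈ Finset.Ico 1 r, (S.filter (fun β => key β = k)).card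
      = (r - 1) * N1 d (s - 2 * d) := by
    have hc : ∀ k ∈ Finset.Ico 1 r, (S.filter (fun β => key β = k)).card
        = N1 d (s - 2 * d) := fun k hk => by
      rw [Finset.mem_Ico] at hk
      exact hfibk k hk.1 hk.2
    rw [Finset.sum_congr rfl hc, Finset.sum_const, Nat.card_Ico, smul_eq_mul]
  rw [h0, h1]

lemma N1ext_eq (d s : ℕ) : N1ext d ((s : ℤ) - 2 * d) = N1 d (s - 2 * d) := by
  unfold N1ext
  split_ifs with h
  · have h0 : s - 2 * d = 0 := by omega
    rw [h0]
    have hemp : TwinFree d ∅ := fun x hx => by simp at hx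
    unfold N1
    rw [show (0:ℕ) - 1 = 0 from rfl, show Finset.Icc 1 0 = (∅ : Finset ℕ) from rfl,
      Finset.powerset_empty, Finset.filter_singleton, if_pos hemp, Finset.card_singleton]
  · congr 1
    omega

theorem r_reduction (d r : ℕ) (hr : 0 < r) (hrd : r ≤ d) :
    (∀ s : ℕ, 1 ≤ s → s ≤ d → N d r s = N1 d s) ∧
    (∀ s : ℕ, d + 1 ≤ s →
      N d r s = N1 d s + (r - 1) * N1ext d ((s : ℤ) - 2 * d)) := by
  refine ⟨fun s h1 h2 => part1 d r s hr hrd h1 h2, fun s hs => ?_⟩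
  rw [N1ext_eq, part2 d r s hr hrd hs]
end

section
/- For any positive integers d and s, the number of d-th order twin-free subsets of {1, ..., s−1} equals the number of compositions of s + d − 1 into parts each of size 1 or d+1 (ordered sequences of parts from {1, d+1} summing to s + d − 1). -/
/-!
Both sides satisfy `a (m + 1) = a m + a (m - d)` from the point where they stop being `1`:
a twin-free subset of `{1, …, m}` either avoids `m` or is `insert m γ` with `γ` a twin-free
subset of `{1, …, m - d - 1}`, and a composition with parts in `{1, d + 1}` starts with a part
`1` or a part `d + 1`.
-/

open Finset

section TwinFree

variable {d : ℕ} {β : Finset ℕ}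

theorem twinFree_iff_lt : TwinFree d β ↔ ∀ x ∈ β, ∀ y ∈ β, x < y → x + d < y := by
  refine ⟨fun h x hx y hy hxy => ?_, fun h x hx y hy hxy => ?_⟩
  · have := h x hx y hy hxy.ne
    omega
  · rcases hxy.lt_or_gt with hxy | hxy
    · have := h x hx y hy hxy
      omega
    · have := h y hy x hx hxy
      omega

theorem twinFree_insert_iff {a : ℕ} (ha : ∀ x ∈ β, x < a) :
    TwinFree d (insert a β) ↔ TwinFree d β ∧ ∀ x ∈ β, x + d < a := by
  simp only [twinFree_iff_lt, forall_mem_insert, lt_irrefl, false_imp_iff, true_and]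
  constructor
  · rintro ⟨-, h⟩
    exact ⟨fun x hx y hy => (h x hx).2 y hy, fun x hx => (h x hx).1 (ha x hx)⟩
  · rintro ⟨h, hbound⟩
    exact ⟨fun y hy hay => ((ha y hy).asymm hay).elim,
      fun x hx => ⟨fun _ => hbound x hx, h x hx⟩⟩

end TwinFree

theorem card_filter_twinFree_powerset_insert (d : ℕ) {s : Finset ℕ} {a : ℕ}
    (hs : ∀ x ∈ s, x < a) :
    #{β ∈ (insert a s).powerset | TwinFree d β} =
      #{β ∈ s.powerset | TwinFree d β} +
        #{β ∈ s.powerset | TwinFree d β ∧ ∀ x ∈ β, x + d < a} := by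
  have ha : a ∉ s := fun h => (hs a h).false
  rw [powerset_insert, filter_union, card_union_of_disjoint, filter_image, card_image_of_injOn]
  · congr 2
    exact filter_congr fun β hβ => twinFree_insert_iff fun x hx => hs x (mem_powerset.1 hβ hx)
  · intro β₁ hβ₁ β₂ hβ₂ heq
    rw [← erase_insert fun h => ha (mem_powerset.1 (mem_filter.1 hβ₁).1 h), heq,
      erase_insert fun h => ha (mem_powerset.1 (mem_filter.1 hβ₂).1 h)]
  · refine disjoint_filter_filter (disjoint_left.2 fun β hβ hβ' => ?_)
    obtain ⟨γ, -, rfl⟩ := mem_image.1 hβ'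
    exact ha (mem_powerset.1 hβ (mem_insert_self a γ))

theorem N1_of_le_one (d : ℕ) {t : ℕ} (ht : t ≤ 1) : N1 d t = 1 := by
  rw [N1, Icc_eq_empty (by omega), powerset_empty, filter_singleton,
    if_pos (show TwinFree d ∅ from fun x hx => absurd hx (notMem_empty x)), card_singleton]

theorem N1_add_two (d m : ℕ) : N1 d (m + 2) = N1 d (m + 1) + N1 d (m + 1 - d) := by
  have hIcc : Icc 1 (m + 1) = insert (m + 1) (Icc 1 m) :=
    (insert_Icc_right_eq_Icc_add_one (by omega)).symm
  have hbound : {β ∈ (Icc 1 m).powerset | TwinFree d β ∧ ∀ x ∈ β, x + d < m + 1} =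
      {β ∈ (Icc 1 (m - d)).powerset | TwinFree d β} := by
    ext β
    simp only [mem_filter, mem_powerset, subset_iff, mem_Icc]
    constructor
    · rintro ⟨hsub, htf, hlt⟩
      exact ⟨fun x hx => ⟨(hsub hx).1, by have := hlt x hx; omega⟩, htf⟩
    · rintro ⟨hsub, htf⟩
      exact ⟨fun x hx => ⟨(hsub hx).1, by have := hsub hx; omega⟩, htf,
        fun x hx => by have := hsub hx; omega⟩
  rw [N1, N1, N1, show m + 2 - 1 = m + 1 from rfl, Nat.add_sub_cancel,
    show m + 1 - d - 1 = m - d by omega, hIcc,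
    card_filter_twinFree_powerset_insert d fun x hx => Nat.lt_succ_of_le (mem_Icc.1 hx).2, hbound]

def restrictedCompositions (d n : ℕ) : Set (List ℕ) :=
  {l | (∀ p ∈ l, p = 1 ∨ p = d + 1) ∧ l.sum = n}

theorem List.finite_setOf_forall_pos_sum_eq (n : ℕ) :
    {l : List ℕ | (∀ p ∈ l, 0 < p) ∧ l.sum = n}.Finite :=
  (Set.finite_range (Composition.blocks (n := n))).subset
    fun l ⟨hpos, hsum⟩ => ⟨⟨l, hpos _, hsum⟩, rfl⟩

namespace restrictedCompositions

variable {d n : ℕ}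

theorem finite : (restrictedCompositions d n).Finite :=
  (List.finite_setOf_forall_pos_sum_eq n).subset fun _ ⟨hparts, hsum⟩ =>
    ⟨fun p hp => by rcases hparts p hp with rfl | rfl <;> omega, hsum⟩

theorem eq_singleton_of_le (h : n ≤ d) : restrictedCompositions d n = {List.replicate n 1} := by
  ext l
  simp only [restrictedCompositions, Set.mem_ofPred_eq, Set.mem_singleton_iff]
  constructor
  · rintro ⟨hparts, rfl⟩
    have hones : ∀ p ∈ l, p = 1 := fun p hp =>
      (hparts p hp).resolve_right fun hp' => by have := List.le_sum_of_mem hp; omega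
    obtain ⟨k, rfl⟩ : ∃ k, l = List.replicate k 1 :=
      ⟨_, List.eq_replicate_iff.2 ⟨rfl, hones⟩⟩
    simp
  · rintro rfl
    exact ⟨fun p hp => .inl (List.eq_of_mem_replicate hp), by simp⟩

theorem ncard_of_le (h : n ≤ d) : (restrictedCompositions d n).ncard = 1 := by
  rw [eq_singleton_of_le h, Set.ncard_singleton]

theorem cons_mem_iff {a : ℕ} {l : List ℕ} :
    a :: l ∈ restrictedCompositions d n ↔
      (a = 1 ∨ a = d + 1) ∧ a ≤ n ∧ l ∈ restrictedCompositions d (n - a) := by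
  simp only [restrictedCompositions, Set.mem_ofPred_eq, List.forall_mem_cons, List.sum_cons]
  constructor
  · rintro ⟨⟨ha, hl⟩, hsum⟩
    exact ⟨ha, by omega, hl, by omega⟩
  · rintro ⟨ha, hle, hl, hsum⟩
    exact ⟨⟨ha, hl⟩, by omega⟩

theorem add_add_one_eq_union (m : ℕ) :
    restrictedCompositions d (m + d + 1) =
      List.cons 1 '' restrictedCompositions d (m + d) ∪
        List.cons (d + 1) '' restrictedCompositions d m := by
  ext (_ | ⟨a, l⟩)
  · simp [restrictedCompositions]
  · simp only [cons_mem_iff, Set.mem_union, Set.mem_image, List.cons.injEq]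
    constructor
    · rintro ⟨rfl | rfl, -, hl⟩
      · exact .inl ⟨l, hl, rfl, rfl⟩
      · exact .inr ⟨l, by simpa using hl, rfl, rfl⟩
    · rintro (⟨l, hl, rfl, rfl⟩ | ⟨l, hl, rfl, rfl⟩)
      · exact ⟨.inl rfl, by omega, hl⟩
      · exact ⟨.inr rfl, by omega, by simpa using hl⟩

theorem ncard_add_add_one (hd : 0 < d) (m : ℕ) :
    (restrictedCompositions d (m + d + 1)).ncard =
      (restrictedCompositions d (m + d)).ncard + (restrictedCompositions d m).ncard := by
  have hdisj : Disjoint (List.cons 1 '' restrictedCompositions d (m + d))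
      (List.cons (d + 1) '' restrictedCompositions d m) := by
    rw [Set.disjoint_left]
    rintro _ ⟨l, -, rfl⟩ ⟨l', -, heq⟩
    simp only [List.cons.injEq] at heq
    omega
  rw [add_add_one_eq_union m,
    Set.ncard_union_eq hdisj (finite.image _) (finite.image _),
    Set.ncard_image_of_injective _ List.cons_injective,
    Set.ncard_image_of_injective _ List.cons_injective]

end restrictedCompositions

theorem N1_eq_restricted_compositions_general (d s : ℕ) (hd : 0 < d) :
    N1 d s =
      {l : List ℕ | (∀ p ∈ l, p = 1 ∨ p = d + 1) ∧ l.sum = s + d - 1}.ncard := by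
  change N1 d s = (restrictedCompositions d (s + d - 1)).ncard
  induction s using Nat.strong_induction_on with
  | _ s ih =>
    match s, ih with
    | 0, _ | 1, _ => rw [N1_of_le_one d (by omega), restrictedCompositions.ncard_of_le (by omega)]
    | s + 2, ih =>
      have hshift : N1 d (s + 1 - d) = (restrictedCompositions d s).ncard := by
        rcases le_or_gt d (s + 1) with h | h
        · rw [ih _ (by omega), show s + 1 - d + d - 1 = s by omega]
        · rw [N1_of_le_one d (by omega), restrictedCompositions.ncard_of_le (by omega)]
      rw [N1_add_two, ih (s + 1) (by omega), hshift, show s + 1 + d - 1 = s + d by omega,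
        show s + 2 + d - 1 = s + d + 1 by omega, restrictedCompositions.ncard_add_add_one hd]

theorem N1_eq_restricted_compositions (d s : ℕ) (hd : 0 < d) (hs : 0 < s) :
    N1 d s =
      {l : List ℕ | (∀ p ∈ l, p = 1 ∨ p = d + 1) ∧ l.sum = s + d - 1}.ncard :=
  N1_eq_restricted_compositions_general d s hd
end

section
/- For positive integers r ≤ d and s ≥ 1, define N_{d,r}(s) as the number of d-th order twin-free subsets β of {1,...,s+r−1} such that x ∈ β, x ≥ s implies x−s ∈ β and x ∈ β, x ≥ s+r implies x−(s+r) ∈ β. Then N_{d,r}(s) = Σ_{μ=0}^{⌈(s−1)/(d+1)⌉} C(s+d−dμ−1, μ) + (r−1)·Σ_{μ=0}^{⌈(s−2d−1)/(d+1)⌉} C(s−d−dμ−1, μ). -/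
open Finset

namespace NFaux

def TF (d m : ℕ) : Finset (Finset ℕ) := (Finset.Icc 1 m).powerset.filter (TwinFree d)

def T (d m : ℕ) : ℕ := (TF d m).card

def L (d m : ℕ) : ℕ := (m+d)/(d+1) + 1

def S (d m : ℕ) : ℕ := ∑ μ ∈ Finset.range (L d m), (m + d - d*μ).choose μ

lemma mem_TF (d m β) : β ∈ TF d m ↔ β ⊆ Finset.Icc 1 m ∧ TwinFree d β := by
  unfold TF; rw [Finset.mem_filter, Finset.mem_powerset]


lemma div_mul_ge (a b : ℕ) (hb : 0 < b) : a ≤ b * (a/b) + (b-1) := by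
  have h1 := Nat.div_add_mod a b
  have h2 : a % b < b := Nat.mod_lt _ hb
  omega

lemma vanish (d m μ : ℕ) (h : m + d + 1 ≤ d*μ + μ) : (m + d - d*μ).choose μ = 0 := by
  apply Nat.choose_eq_zero_of_lt
  rcases μ with _ | ν
  · simp at h
  · have : d * (ν+1) = d*ν + d := by ring
    omega

lemma S_ext (d m K : ℕ) (hK : L d m ≤ K) :
    ∑ μ ∈ Finset.range K, (m + d - d*μ).choose μ = S d m := by
  unfold S
  rw [← Finset.sum_subset (Finset.range_subset_range.2 hK)]
  intro x _ hx
  rw [Finset.mem_range, not_lt] at hx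
  apply vanish
  have h1 := div_mul_ge (m+d) (d+1) (by omega)
  have h2 : (d+1) * ((m+d)/(d+1) + 1) ≤ (d+1) * x := by
    apply Nat.mul_le_mul_left; exact hx
  have h3 : (d+1) * ((m+d)/(d+1) + 1) = (d+1) * ((m+d)/(d+1)) + d + 1 := by ring
  have h4 : (d+1) * x = d * x + x := by ring
  omega

lemma L_le_two (d m : ℕ) (h : m ≤ d + 1) : L d m ≤ 2 := by
  have : (m+d)/(d+1) < 2 := by
    rw [Nat.div_lt_iff_lt_mul (by omega)]
    omega
  unfold L; omega

lemma S_small (d m : ℕ) (h : m ≤ d + 1) : S d m = m + 1 := by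
  rw [← S_ext d m 2 (L_le_two d m h)]
  rw [Finset.sum_range_succ, Finset.sum_range_succ, Finset.sum_range_zero]
  simp [Nat.choose_one_right]
  omega

lemma dmu_le (d m μ : ℕ) (hμ : μ < L d m) : d * μ + μ ≤ m + d := by
  have h1 : μ ≤ (m+d)/(d+1) := by unfold L at hμ; omega
  have h2 : (d+1) * μ ≤ (d+1) * ((m+d)/(d+1)) := Nat.mul_le_mul_left _ h1
  have h3 := Nat.div_mul_le_self (m+d) (d+1)
  have h4 := Nat.mul_div_le (m+d) (d+1)
  have h5 : (d+1) * μ = d * μ + μ := by ring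
  omega

lemma S_rec (d m : ℕ) : S d (m + d + 1) = S d (m + d) + S d m := by
  have hL : L d (m + d + 1) = L d m + 1 := by
    unfold L
    have : m + d + 1 + d = (m + d) + (d + 1) := by ring
    rw [this, Nat.add_div_right _ (by omega)]
  have hL2 : L d (m + d) ≤ L d m + 1 := by
    unfold L
    have h1 : (m + d + d) ≤ (m + d) + (d+1) := by omega
    have h2 := Nat.div_le_div_right (c := d+1) h1
    rw [Nat.add_div_right _ (by omega)] at h2
    omega
  have hS1 : S d (m+d+1) = (∑ μ ∈ Finset.range (L d m), (m + d + 1 + d - d * (μ+1)).choose (μ+1)) + (m + d + 1 + d - d * 0).choose 0 := by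
    unfold S; rw [hL, Finset.sum_range_succ']
  rw [hS1]
  have key : ∀ μ ∈ Finset.range (L d m),
      (m + d + 1 + d - d * (μ+1)).choose (μ+1)
      = (m + d - d*μ).choose μ + (m + d - d*μ).choose (μ+1) := by
    intro μ hμ
    rw [Finset.mem_range] at hμ
    have := dmu_le d m μ hμ
    have h1 : m + d + 1 + d - d * (μ+1) = (m + d - d*μ) + 1 := by
      have : d * (μ+1) = d*μ + d := by ring
      omega
    rw [h1, Nat.choose_succ_succ]
  have lhs_eq : (∑ μ ∈ Finset.range (L d m), (m + d + 1 + d - d * (μ+1)).choose (μ+1))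
      = (∑ μ ∈ Finset.range (L d m), (m + d - d*μ).choose μ)
        + ∑ μ ∈ Finset.range (L d m), (m + d - d*μ).choose (μ+1) := by
    rw [Finset.sum_congr rfl key, Finset.sum_add_distrib]
  rw [lhs_eq]
  have hright : S d (m + d) = (∑ μ ∈ Finset.range (L d m), (m + d - d*μ).choose (μ+1)) + 1 := by
    rw [← S_ext d (m+d) (L d m + 1) hL2, Finset.sum_range_succ']
    congr 1
    · apply Finset.sum_congr rfl
      intro μ hμ
      rw [Finset.mem_range] at hμ
      have := dmu_le d m μ hμ
      have h1 : m + d + d - d * (μ+1) = m + d - d*μ := by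
        have : d * (μ+1) = d*μ + d := by ring
        omega
      rw [h1]
    · simp
  rw [hright]
  have hS2 : S d m = ∑ μ ∈ Finset.range (L d m), (m + d - d*μ).choose μ := rfl
  rw [hS2]
  simp [Nat.choose_zero_right]
  omega


lemma T_small (d m : ℕ) (h : m ≤ d + 1) : T d m = m + 1 := by
  have hset : TF d m = insert ∅ ((Finset.Icc 1 m).image ({·})) := by
    ext β
    rw [mem_TF, Finset.mem_insert, Finset.mem_image]
    constructor
    · rintro ⟨hsub, htf⟩
      by_cases hβ : β = ∅
      · left; exact hβ
      · right
        obtain ⟨a, ha⟩ := Finset.nonempty_of_ne_empty hβ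
        refine ⟨a, hsub ha, ?_⟩
        symm
        apply Finset.eq_singleton_iff_unique_mem.2 ⟨ha, ?_⟩
        intro b hb
        by_contra hne
        have := htf b hb a ha hne
        have h1 := Finset.mem_Icc.1 (hsub ha)
        have h2 := Finset.mem_Icc.1 (hsub hb)
        omega
    · rintro (rfl | ⟨a, ha, rfl⟩)
      · exact ⟨Finset.empty_subset _, fun x hx => absurd hx (Finset.notMem_empty x)⟩
      · refine ⟨Finset.singleton_subset_iff.2 ha, ?_⟩
        intro x hx y hy hne
        rw [Finset.mem_singleton] at hx hy
        exact absurd (hx.trans hy.symm) hne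
  unfold T
  rw [hset, Finset.card_insert_of_notMem, Finset.card_image_of_injective _
    (fun a b hab => Finset.singleton_injective hab), Nat.card_Icc]
  · omega
  · rw [Finset.mem_image]
    rintro ⟨a, _, ha⟩
    exact Finset.singleton_ne_empty a ha


lemma T_rec (d m : ℕ) : T d (m + d + 1) = T d (m + d) + T d m := by
  set M := m + d + 1 with hM
  have hsplit := Finset.card_filter_add_card_filter_not
    (s := TF d M) (p := fun β => M ∈ β)
  have hA : (TF d M).filter (fun β => ¬ (fun β => M ∈ β) β) = TF d (m + d) := by
    ext β
    rw [Finset.mem_filter, mem_TF, mem_TF]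
    constructor
    · rintro ⟨⟨hsub, htf⟩, hM'⟩
      refine ⟨?_, htf⟩
      intro x hx
      have h1 := Finset.mem_Icc.1 (hsub hx)
      have h2 : x ≠ M := fun h => hM' (h ▸ hx)
      rw [Finset.mem_Icc]; omega
    · rintro ⟨hsub, htf⟩
      refine ⟨⟨fun x hx => ?_, htf⟩, fun h => ?_⟩
      · have h1 := Finset.mem_Icc.1 (hsub hx); rw [Finset.mem_Icc]; omega
      · have h1 := Finset.mem_Icc.1 (hsub h); omega
  have hB : ((TF d M).filter (fun β => M ∈ β)).card = T d m := by
    unfold T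
    apply Finset.card_bij' (fun β _ => β.erase M) (fun γ _ => insert M γ)
    · intro β hβ
      rw [Finset.mem_filter] at hβ
      exact Finset.insert_erase hβ.2
    · intro γ hγ
      rw [mem_TF] at hγ
      apply Finset.erase_insert
      intro h; have := Finset.mem_Icc.1 (hγ.1 h); omega

    · intro β hβ
      rw [Finset.mem_filter, mem_TF] at hβ
      obtain ⟨⟨hsub, htf⟩, hMβ⟩ := hβ
      rw [mem_TF]
      constructor
      · intro y hy
        obtain ⟨hyM, hyβ⟩ := Finset.mem_erase.1 hy
        have h1 := Finset.mem_Icc.1 (hsub hyβ)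
        have h2 := htf y hyβ M hMβ hyM
        rw [Finset.mem_Icc]; omega
      · intro x hx y hy hne
        exact htf x (Finset.mem_of_mem_erase hx) y (Finset.mem_of_mem_erase hy) hne
    · intro γ hγ
      rw [mem_TF] at hγ
      obtain ⟨hsub, htf⟩ := hγ
      have hMγ : M ∉ γ := by
        intro h; have := Finset.mem_Icc.1 (hsub h); omega
      rw [Finset.mem_filter, mem_TF]
      refine ⟨⟨?_, ?_⟩, Finset.mem_insert_self _ _⟩
      · intro x hx
        rcases Finset.mem_insert.1 hx with rfl | hx
        · rw [Finset.mem_Icc]; omega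
        · have := Finset.mem_Icc.1 (hsub hx); rw [Finset.mem_Icc]; omega
      · intro x hx y hy hne
        rcases Finset.mem_insert.1 hx with rfl | hx <;>
          rcases Finset.mem_insert.1 hy with rfl | hy
        · exact absurd rfl hne
        · have := Finset.mem_Icc.1 (hsub hy); omega
        · have := Finset.mem_Icc.1 (hsub hx); omega
        · exact htf x hx y hy hne
  rw [hA] at hsplit
  unfold T at hB ⊢
  omega


lemma T_eq_S (d m : ℕ) : T d m = S d m := by
  induction m using Nat.strong_induction_on with
  | _ m ih =>
    by_cases h : m ≤ d + 1
    · rw [T_small d m h, S_small d m h]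
    · obtain ⟨k, rfl⟩ : ∃ k, m = k + d + 1 := ⟨m - d - 1, by omega⟩
      rw [T_rec, S_rec, ih (k + d) (by omega), ih k (by omega)]


lemma nat_div_bounds (a b : ℕ) (hb : 0 < b) : a / b * b ≤ a ∧ a < (a / b + 1) * b := by
  refine ⟨Nat.div_mul_le_self a b, ?_⟩
  have h1 := Nat.div_add_mod a b
  have h2 : a % b < b := Nat.mod_lt _ hb
  calc a = b * (a/b) + a % b := h1.symm
    _ < b * (a/b) + b := by omega
    _ = (a/b + 1) * b := by ring

lemma ceil_nat_div (m d : ℕ) : ⌈(m:ℚ)/((d:ℚ)+1)⌉ = (((m+d)/(d+1) : ℕ) : ℤ) := by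
  have hpos : (0:ℚ) < (d:ℚ)+1 := by positivity
  obtain ⟨key1, key2⟩ := nat_div_bounds (m+d) (d+1) (by omega)
  rw [Int.ceil_eq_iff]
  have c1 : (((m+d)/(d+1) : ℕ) : ℚ) * ((d:ℚ)+1) ≤ (m:ℚ) + d := by
    exact_mod_cast key1
  have c2 : (m:ℚ) + d < ((((m+d)/(d+1) : ℕ) : ℚ) + 1) * ((d:ℚ)+1) := by
    exact_mod_cast key2
  have hcast : ((((m+d)/(d+1) : ℕ) : ℤ) : ℚ) = (((m+d)/(d+1) : ℕ) : ℚ) := by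
    norm_cast
  rw [hcast]
  constructor
  · rw [lt_div_iff₀ hpos]
    nlinarith [c1]
  · rw [div_le_iff₀ hpos]
    have e : ((m+d)/(d+1)+1)*(d+1) = (m+d)/(d+1)*(d+1) + (d+1) := by ring
    have key3 : m ≤ (m+d)/(d+1) * (d+1) := by omega
    have c3 : (m:ℚ) ≤ (((m+d)/(d+1) : ℕ) : ℚ) * ((d:ℚ)+1) := by exact_mod_cast key3
    linarith


lemma N_eq (d r s : ℕ) (hr : 0 < r) (hrd : r ≤ d) (hs : 1 ≤ s) :
    N d r s = T d (s-1) + (r-1) * (if d + 1 ≤ s then T d (s - (2*d+1)) else 0) := by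
  classical
  set M := s + r - 1 with hMdef
  set P := ((Finset.Icc 1 M).powerset.filter
    (fun β => TwinFree d β ∧ (∀ x ∈ β, s ≤ x → x - s ∈ β) ∧
      (∀ x ∈ β, s + r ≤ x → x - (s + r) ∈ β))) with hPdef
  have memP : ∀ β, β ∈ P ↔ β ⊆ Finset.Icc 1 M ∧ TwinFree d β ∧
      (∀ x ∈ β, s ≤ x → x - s ∈ β) := by
    intro β
    rw [hPdef, Finset.mem_filter, Finset.mem_powerset]
    constructor
    · rintro ⟨h1, h2, h3, _⟩; exact ⟨h1, h2, h3⟩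
    · rintro ⟨h1, h2, h3⟩
      refine ⟨h1, h2, h3, ?_⟩
      intro x hx hsx
      have := Finset.mem_Icc.1 (h1 hx)
      omega
  have hsplit := Finset.card_filter_add_card_filter_not
    (s := P) (p := fun β => ∃ x ∈ β, s ≤ x)
  -- the part with no element ≥ s
  have hA : P.filter (fun β => ¬ ∃ x ∈ β, s ≤ x) = TF d (s-1) := by
    ext β
    simp only [Finset.mem_filter, memP, mem_TF, not_exists, not_and, not_le]
    constructor
    · rintro ⟨⟨h1, h2, _⟩, h4⟩
      refine ⟨?_, h2⟩
      intro x hx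
      have := Finset.mem_Icc.1 (h1 hx)
      have := h4 x hx
      rw [Finset.mem_Icc]; omega
    · rintro ⟨h1, h2⟩
      have hb : ∀ x ∈ β, 1 ≤ x ∧ x ≤ s - 1 := by
        intro x hx; exact Finset.mem_Icc.1 (h1 hx)
      refine ⟨⟨?_, h2, ?_⟩, ?_⟩
      · intro x hx
        have := hb x hx
        rw [Finset.mem_Icc]; omega
      · intro x hx hsx
        have := hb x hx; omega
      · intro x hx
        have := hb x hx; omega
  -- the part with an element ≥ s
  have hB : (P.filter (fun β => ∃ x ∈ β, s ≤ x)).card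
      = (r-1) * (if d + 1 ≤ s then T d (s - (2*d+1)) else 0) := by
    by_cases hds : d + 1 ≤ s
    · rw [if_pos hds]
      set m₂ := s - (2*d+1) with hm2
      have hcard : ((Finset.Icc 1 (r-1)) ×ˢ TF d m₂).card = (r-1) * T d m₂ := by
        rw [Finset.card_product, Nat.card_Icc]
        unfold T; congr 1 <;> omega
      rw [← hcard]
      symm
      apply Finset.card_bij
        (fun p _ => insert (s + p.1) (insert p.1 (p.2.image (· + (p.1 + d)))))
      -- maps into target
      · rintro ⟨t, δ⟩ hp
        rw [Finset.mem_product, Finset.mem_Icc, mem_TF] at hp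
        obtain ⟨⟨ht1, ht2⟩, hδsub, hδtf⟩ := hp
        have hδb : ∀ y ∈ δ, 1 ≤ y ∧ y ≤ m₂ := by
          intro y hy; exact Finset.mem_Icc.1 (hδsub hy)
        simp only [Finset.mem_filter, memP]
        have hmem : ∀ z ∈ insert (s+t) (insert t (δ.image (· + (t + d)))),
            z = s + t ∨ z = t ∨ ∃ y ∈ δ, z = y + (t+d) := by
          intro z hz
          rcases Finset.mem_insert.1 hz with rfl | hz
          · left; rfl
          · rcases Finset.mem_insert.1 hz with rfl | hz
            · right; left; rfl
            · obtain ⟨y, hy, hyz⟩ := Finset.mem_image.1 hz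
              exact Or.inr (Or.inr ⟨y, hy, hyz.symm⟩)
        refine ⟨⟨?_, ?_, ?_⟩, ⟨s+t, Finset.mem_insert_self _ _, by omega⟩⟩
        · intro z hz
          rw [Finset.mem_Icc]
          rcases hmem z hz with rfl | rfl | ⟨y, hy, rfl⟩
          · omega
          · omega
          · have := hδb y hy; omega
        · intro z1 hz1 z2 hz2 hne
          rcases hmem z1 hz1 with rfl | rfl | ⟨y1, hy1, rfl⟩ <;>
            rcases hmem z2 hz2 with h2 | h2 | ⟨y2, hy2, h2⟩
          · omega
          · subst h2; omega
          · obtain ⟨y2, hy2, rfl⟩ := h2; have := hδb y2 hy2; omega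
          · subst h2; omega
          · omega
          · obtain ⟨y2, hy2, rfl⟩ := h2; have := hδb y2 hy2; omega
          · subst h2; have := hδb y1 hy1; omega
          · subst h2; have := hδb y1 hy1; omega
          · obtain ⟨y2, hy2, rfl⟩ := h2
            have hb1 := hδb y1 hy1
            have hb2 := hδb y2 hy2
            have hyne : y1 ≠ y2 := by omega
            have := hδtf y1 hy1 y2 hy2 hyne
            omega
        · intro z hz hsz
          rcases hmem z hz with rfl | rfl | ⟨y, hy, rfl⟩
          · have : s + t - s = t := by omega
            rw [this]
            exact Finset.mem_insert_of_mem (Finset.mem_insert_self _ _)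
          · omega
          · have := hδb y hy; omega
      -- injective
      · rintro ⟨t1, δ1⟩ hp1 ⟨t2, δ2⟩ hp2 heq
        rw [Finset.mem_product, Finset.mem_Icc, mem_TF] at hp1 hp2
        obtain ⟨⟨ht11, ht12⟩, hδ1sub, _⟩ := hp1
        obtain ⟨⟨ht21, ht22⟩, hδ2sub, _⟩ := hp2
        have hδ1b : ∀ y ∈ δ1, 1 ≤ y ∧ y ≤ m₂ := fun y hy => Finset.mem_Icc.1 (hδ1sub hy)
        have hδ2b : ∀ y ∈ δ2, 1 ≤ y ∧ y ≤ m₂ := fun y hy => Finset.mem_Icc.1 (hδ2sub hy)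
        simp only at heq
        -- first: t1 = t2
        have htt : t1 = t2 := by
          have h1 : s + t1 ∈ insert (s+t2) (insert t2 (δ2.image (· + (t2 + d)))) := by
            rw [← heq]; exact Finset.mem_insert_self _ _
          rcases Finset.mem_insert.1 h1 with h | h
          · omega
          · rcases Finset.mem_insert.1 h with h | h
            · omega
            · obtain ⟨y, hy, hyz⟩ := Finset.mem_image.1 h
              have := hδ2b y hy; omega
        subst htt
        have hδδ : δ1 = δ2 := by
          ext y
          constructor
          · intro hy
            have hb := hδ1b y hy
            have h1 : y + (t1 + d) ∈ insert (s+t1) (insert t1 (δ2.image (· + (t1 + d)))) := by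
              rw [← heq]
              exact Finset.mem_insert_of_mem (Finset.mem_insert_of_mem
                (Finset.mem_image_of_mem _ hy))
            rcases Finset.mem_insert.1 h1 with h | h
            · omega
            · rcases Finset.mem_insert.1 h with h | h
              · omega
              · obtain ⟨y', hy', hyz⟩ := Finset.mem_image.1 h
                have : y' = y := by omega
                exact this ▸ hy'
          · intro hy
            have hb := hδ2b y hy
            have h1 : y + (t1 + d) ∈ insert (s+t1) (insert t1 (δ1.image (· + (t1 + d)))) := by
              rw [heq]
              exact Finset.mem_insert_of_mem (Finset.mem_insert_of_mem
                (Finset.mem_image_of_mem _ hy))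
            rcases Finset.mem_insert.1 h1 with h | h
            · omega
            · rcases Finset.mem_insert.1 h with h | h
              · omega
              · obtain ⟨y', hy', hyz⟩ := Finset.mem_image.1 h
                have : y' = y := by omega
                exact this ▸ hy'
        rw [hδδ]
      -- surjective
      · intro β hβ
        rw [Finset.mem_filter, memP] at hβ
        obtain ⟨⟨hsub, htf, hclos⟩, x, hxβ, hsx⟩ := hβ
        have hbd : ∀ z ∈ β, 1 ≤ z ∧ z ≤ M := fun z hz => Finset.mem_Icc.1 (hsub hz)
        have hxM := hbd x hxβ
        -- x ≠ s
        have hxs : s + 1 ≤ x := by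
          rcases Nat.eq_or_lt_of_le hsx with h | h
          · exfalso
            have h0 : x - s ∈ β := hclos x hxβ hsx
            have := hbd _ h0
            omega
          · omega
        set t := x - s with htdef
        have htβ : t ∈ β := hclos x hxβ hsx
        have ht1 : 1 ≤ t := by omega
        have ht2 : t ≤ r - 1 := by omega
        have htx : t ≠ x := by omega
        have htfx : d < x - t := by
          have := htf x hxβ t htβ (by omega)
          omega
        -- s > d automatic; elements other than x, t are in (t+d, s+t-d-1]
        have hmid : ∀ z ∈ β, z ≠ x → z ≠ t → t + d + 1 ≤ z ∧ z ≤ s + t - d - 1 := by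
          intro z hz hzx hzt
          have hzb := hbd z hz
          -- z < s
          have hzs : z < s := by
            by_contra hc
            push_neg at hc
            have hz1 : s + 1 ≤ z := by
              rcases Nat.eq_or_lt_of_le hc with h | h
              · exfalso
                have h0 : z - s ∈ β := hclos z hz hc
                have := hbd _ h0
                omega
              · omega
            have := htf z hz x hxβ hzx
            omega
          have h1 := htf z hz t htβ hzt
          have h2 := htf z hz x hxβ hzx
          omega
        refine ⟨⟨t, ((β.erase x).erase t).image (· - (t + d))⟩, ?_, ?_⟩
        · rw [Finset.mem_product, Finset.mem_Icc, mem_TF]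
          have herasemem : ∀ z ∈ (β.erase x).erase t, z ∈ β ∧ z ≠ x ∧ z ≠ t := by
            intro z hz
            have h1 := Finset.mem_erase.1 hz
            have h2 := Finset.mem_erase.1 h1.2
            exact ⟨h2.2, h2.1, h1.1⟩
          refine ⟨⟨ht1, ht2⟩, ?_, ?_⟩
          · intro y hy
            obtain ⟨z, hz, rfl⟩ := Finset.mem_image.1 hy
            obtain ⟨hzβ, hzx, hzt⟩ := herasemem z hz
            have := hmid z hzβ hzx hzt
            rw [Finset.mem_Icc]
            omega
          · intro y1 hy1 y2 hy2 hne
            obtain ⟨z1, hz1, rfl⟩ := Finset.mem_image.1 hy1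
            obtain ⟨z2, hz2, rfl⟩ := Finset.mem_image.1 hy2
            obtain ⟨hz1β, hz1x, hz1t⟩ := herasemem z1 hz1
            obtain ⟨hz2β, hz2x, hz2t⟩ := herasemem z2 hz2
            have hb1 := hmid z1 hz1β hz1x hz1t
            have hb2 := hmid z2 hz2β hz2x hz2t
            have hzne : z1 ≠ z2 := by omega
            have := htf z1 hz1β z2 hz2β hzne
            omega
        · simp only
          have himg : (((β.erase x).erase t).image (· - (t + d))).image (· + (t + d))
              = (β.erase x).erase t := by
            rw [Finset.image_image]
            have hcong : ∀ z ∈ ((β.erase x).erase t : Finset ℕ),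
                ((· + (t+d)) ∘ (· - (t+d))) z = id z := by
              intro z hz
              have h1 := Finset.mem_erase.1 hz
              have h2 := Finset.mem_erase.1 h1.2
              have := hmid z h2.2 h2.1 h1.1
              simp only [Function.comp, id]
              omega
            rw [Finset.image_congr hcong, Finset.image_id]
          rw [himg, Finset.insert_erase (Finset.mem_erase.2 ⟨by omega, htβ⟩)]
          have hxeq : s + t = x := by omega
          rw [hxeq, Finset.insert_erase hxβ]
    · -- s ≤ d : the filter is empty
      rw [if_neg hds]
      have hemp : P.filter (fun β => ∃ x ∈ β, s ≤ x) = ∅ := by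
        rw [Finset.filter_eq_empty_iff]
        intro β hβ
        rw [memP] at hβ
        obtain ⟨hsub, htf, hclos⟩ := hβ
        rintro ⟨x, hxβ, hsx⟩
        have hbd : ∀ z ∈ β, 1 ≤ z ∧ z ≤ M := fun z hz => Finset.mem_Icc.1 (hsub hz)
        have hxs : s + 1 ≤ x := by
          rcases Nat.eq_or_lt_of_le hsx with h | h
          · exfalso
            have h0 : x - s ∈ β := hclos x hxβ hsx
            have := hbd _ h0
            omega
          · omega
        have htβ : x - s ∈ β := hclos x hxβ hsx
        have := hbd _ htβ
        have := hbd _ hxβ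
        have := htf x hxβ (x - s) htβ (by omega)
        omega
      rw [hemp]
      simp
  rw [hA, hB] at hsplit
  have hgoal : N d r s = P.card := by
    unfold N
    rw [hPdef, hMdef]
  rw [hgoal]
  unfold T at *
  omega


end NFaux

theorem N_formula (d r s : ℕ) (hr : 0 < r) (hrd : r ≤ d) (hs : 1 ≤ s) :
    N d r s =
      (∑ μ ∈ Finset.range ((⌈((s : ℚ) - 1) / (d + 1)⌉ + 1).toNat),
        (s + d - d * μ - 1).choose μ) +
      (r - 1) * ∑ μ ∈ Finset.range ((⌈((s : ℚ) - 2 * d - 1) / (d + 1)⌉ + 1).toNat),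
        ((s : ℤ) - d - d * μ - 1).toNat.choose μ := by
  rw [NFaux.N_eq d r s hr hrd hs]
  congr 1
  · -- first summand
    have h1 : ((s - 1 : ℕ) : ℚ) = (s:ℚ) - 1 := by
      have h2 : s - 1 + 1 = s := by omega
      calc ((s-1:ℕ):ℚ) = (((s-1)+1 : ℕ):ℚ) - 1 := by push_cast; ring
        _ = (s:ℚ) - 1 := by rw [h2]
    have hceil1 : ((⌈((s:ℚ) - 1)/((d:ℚ)+1)⌉ + 1).toNat) = NFaux.L d (s-1) := by
      rw [← h1, NFaux.ceil_nat_div (s-1) d]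
      unfold NFaux.L
      generalize (s - 1 + d)/(d+1) = q
      omega
    rw [NFaux.T_eq_S, hceil1]
    unfold NFaux.S
    apply Finset.sum_congr rfl
    intro μ hμ
    have hm := NFaux.dmu_le d (s-1) μ (Finset.mem_range.1 hμ)
    congr 1
    omega
  · congr 1
    by_cases hds : d + 1 ≤ s
    · rw [if_pos hds]
      by_cases hds2 : 2*d + 1 ≤ s
      · -- large s
        have h1 : ((s - (2*d+1) : ℕ) : ℚ) = (s:ℚ) - 2 * (d:ℚ) - 1 := by
          have h2 : s - (2*d+1) + (2*d+1) = s := by omega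
          calc ((s - (2*d+1):ℕ):ℚ) = (((s - (2*d+1)) + (2*d+1) : ℕ):ℚ) - 2*(d:ℚ) - 1 := by
                push_cast; ring
            _ = (s:ℚ) - 2*(d:ℚ) - 1 := by rw [h2]
        have hceil2 : ((⌈((s:ℚ) - 2*(d:ℚ) - 1)/((d:ℚ)+1)⌉ + 1).toNat)
            = NFaux.L d (s - (2*d+1)) := by
          rw [← h1, NFaux.ceil_nat_div (s - (2*d+1)) d]
          unfold NFaux.L
          generalize (s - (2*d+1) + d)/(d+1) = q
          omega
        rw [NFaux.T_eq_S, hceil2]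
        unfold NFaux.S
        apply Finset.sum_congr rfl
        intro μ hμ
        have hm := NFaux.dmu_le d (s - (2*d+1)) μ (Finset.mem_range.1 hμ)
        have hc : ((d:ℤ) * (μ:ℤ)) = ((d*μ : ℕ) : ℤ) := by push_cast; ring
        congr 1
        rw [hc]
        omega
      · -- middle s
        have hceil0 : ⌈((s:ℚ) - 2*(d:ℚ) - 1)/((d:ℚ)+1)⌉ = 0 := by
          have hpos : (0:ℚ) < (d:ℚ)+1 := by positivity
          have c1 : ((d:ℚ)+1) ≤ (s:ℚ) := by exact_mod_cast hds
          have c2 : (s:ℚ) ≤ 2*(d:ℚ) := by exact_mod_cast (by omega : s ≤ 2*d)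
          rw [Int.ceil_eq_iff]
          constructor
          · rw [lt_div_iff₀ hpos]
            push_cast
            linarith
          · rw [div_le_iff₀ hpos]
            push_cast
            linarith
        rw [hceil0]
        have hz : s - (2*d+1) = 0 := by omega
        rw [hz, NFaux.T_small d 0 (by omega)]
        norm_num
    · rw [if_neg hds]
      have hceil0 : ⌈((s:ℚ) - 2*(d:ℚ) - 1)/((d:ℚ)+1)⌉ = -1 := by
        have hpos : (0:ℚ) < (d:ℚ)+1 := by positivity
        have c1 : (1:ℚ) ≤ (s:ℚ) := by exact_mod_cast hs
        have c2 : (s:ℚ) ≤ (d:ℚ) := by exact_mod_cast (by omega : s ≤ d)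
        rw [Int.ceil_eq_iff]
        constructor
        · rw [lt_div_iff₀ hpos]
          push_cast
          linarith
        · rw [div_le_iff₀ hpos]
          push_cast
          linarith
      rw [hceil0]
      norm_num
end

section
/- For positive integers r ≤ d, the formal power series G(x) = Σ_{s≥1} N_{d,r}(s) x^s satisfies G(x)·(1 − x − x^{d+1})·(1 − x) = x·(1 + (r−1)x^d − r·x^{d+1}), where N_{d,r}(s) = N_{d,1}(s) for 1 ≤ s ≤ d and N_{d,r}(s) = N_{d,1}(s) + (r−1)N_{d,1}(s−2d) for s ≥ d+1, and N_{d,1} satisfies N_{d,1}(t) = 1 for t ≤ 0, N_{d,1}(1) = 1, N_{d,1}(s) = N_{d,1}(s−1) + N_{d,1}(s−d−1) for s ≥ 2. -/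
open PowerSeries

/-!
Read from index `1 - d` on, `N_{d,1}` starts with `d + 1` ones and then obeys
`N(s) = N(s - 1) + N(s - d - 1)`, so `B = Σₙ N(n + 1 - d) xⁿ` is the inverse of `1 - x - x^{d+1}`.
Both pieces of `G` are shifts of `B`: `x^d Σ_{s≥1} N(s) xˢ = x (B - (1 + x + ⋯ + x^{d-1}))` and
`Σ_{s>d} N(s - 2d) xˢ = x^{d+1} B`. Multiplying the claim by `x^d` turns it into ring arithmetic.
-/

section General

variable {R : Type*} [CommRing R]

theorem mk_ite_eq_zero_eq_X_mul (a : ℕ → R) :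
    (mk fun s => if s = 0 then 0 else a s) = X * mk fun n => a (n + 1) := by
  ext (_ | n) <;> simp [coeff_succ_X_mul]

theorem coe_trunc_mk_of_forall_lt_eq {b : ℕ → R} {c : R} {k : ℕ} (hb : ∀ i < k, b i = c) :
    (trunc k (mk b) : R⟦X⟧) = C c * ∑ i ∈ Finset.range k, X ^ i := by
  ext n
  simp only [Polynomial.coeff_coe, coeff_trunc, coeff_mk, coeff_C_mul, map_sum, coeff_X_pow,
    Finset.sum_ite_eq, Finset.mem_range]
  split_ifs with h <;> simp [hb n, h]

theorem mk_mul_one_sub_X_sub_X_pow_succ_eq_C {b : ℕ → R} {c : R} {k : ℕ}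
    (hinit : ∀ n ≤ k, b n = c) (hrec : ∀ n, b (n + k + 1) = b (n + k) + b n) :
    mk b * (1 - X - X ^ (k + 1)) = C c := by
  ext n
  rw [mul_sub, mul_sub, mul_one, map_sub, map_sub, coeff_mk, coeff_mul_X_pow', coeff_C]
  rcases n with _ | m
  · simp [hinit 0 (Nat.zero_le _)]
  rw [coeff_succ_mul_X, coeff_mk, if_neg m.succ_ne_zero]
  rcases le_or_gt (m + 1) k with hm | hm
  · rw [if_neg (by omega), hinit _ hm, hinit m (by omega)]
    ring
  · obtain ⟨j, rfl⟩ := Nat.exists_eq_add_of_le' (Nat.le_of_lt_succ hm)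
    rw [if_pos (by omega), show j + k + 1 - (k + 1) = j by omega, coeff_mk, hrec]
    ring

end General

section Recurrence

variable {d : ℕ} {F : ℤ → ℤ}

theorem mk_mul_one_sub_X_sub_X_pow_succ_eq_one (h0 : ∀ t : ℤ, t ≤ 0 → F t = 1) (h1 : F 1 = 1)
    (hrec : ∀ s : ℤ, 2 ≤ s → F s = F (s - 1) + F (s - d - 1)) :
    (mk fun n : ℕ => F (n + 1 - d)) * (1 - X - X ^ (d + 1)) = 1 := by
  rw [mk_mul_one_sub_X_sub_X_pow_succ_eq_C (c := 1), map_one]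
  · intro n hn
    rcases hn.lt_or_eq with hn | rfl
    · exact h0 _ (by omega)
    · simpa using h1
  · intro n
    push_cast
    convert hrec (n + 2) (by omega) using 2 <;> ring_nf

theorem X_pow_mul_mk_eq_sub (h0 : ∀ t : ℤ, t ≤ 0 → F t = 1) :
    X ^ d * (mk fun n : ℕ => F (n + 1)) =
      (mk fun n : ℕ => F (n + 1 - d)) - ∑ i ∈ Finset.range d, X ^ i := by
  have hsplit := eq_X_pow_mul_shift_add_trunc d (mk fun n : ℕ => F (n + 1 - d))
  rw [coe_trunc_mk_of_forall_lt_eq (c := 1) (fun i hi => h0 _ (by omega)), map_one,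
    one_mul] at hsplit
  have hshift : (mk fun i => coeff (i + d) (mk fun n : ℕ => F (n + 1 - d))) =
      mk fun n : ℕ => F (n + 1) := by
    ext n
    simp only [coeff_mk, Nat.cast_add, add_right_comm _ (d : ℤ), add_sub_cancel_right]
  rw [← hshift, eq_sub_iff_add_eq, ← hsplit]

theorem mk_succ_eq_add_C_mul_X_pow_mul {c : ℤ} {Fr : ℕ → ℤ}
    (hFr1 : ∀ s : ℕ, 1 ≤ s → s ≤ d → Fr s = F s)
    (hFr2 : ∀ s : ℕ, d + 1 ≤ s → Fr s = F s + c * F ((s : ℤ) - 2 * d)) :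
    (mk fun n => Fr (n + 1)) =
      (mk fun n : ℕ => F (n + 1)) + C c * X ^ d * mk fun n : ℕ => F (n + 1 - d) := by
  ext n
  rw [map_add, mul_assoc, coeff_C_mul, coeff_X_pow_mul', coeff_mk, coeff_mk]
  split_ifs with hn
  · rw [coeff_mk, hFr2 _ (by omega), Nat.cast_sub hn]
    push_cast
    ring_nf
  · rw [hFr1 _ (by omega) (by omega)]
    push_cast
    ring

end Recurrence

theorem genfunc_general_general (d r : ℕ) (F : ℤ → ℤ)
    (h0 : ∀ t : ℤ, t ≤ 0 → F t = 1) (h1 : F 1 = 1)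
    (hrec : ∀ s : ℤ, 2 ≤ s → F s = F (s - 1) + F (s - d - 1))
    (Fr : ℕ → ℤ)
    (hFr1 : ∀ s : ℕ, 1 ≤ s → s ≤ d → Fr s = F s)
    (hFr2 : ∀ s : ℕ, d + 1 ≤ s → Fr s = F s + ((r : ℤ) - 1) * F ((s : ℤ) - 2 * d)) :
    (PowerSeries.mk fun s : ℕ => if s = 0 then 0 else Fr s) *
        (1 - PowerSeries.X - PowerSeries.X ^ (d + 1)) * (1 - PowerSeries.X) =
      PowerSeries.X *
        (1 + ((r : PowerSeries ℤ) - 1) * PowerSeries.X ^ d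
          - (r : PowerSeries ℤ) * PowerSeries.X ^ (d + 1)) := by
  have hB := mk_mul_one_sub_X_sub_X_pow_succ_eq_one h0 h1 hrec
  have hA := X_pow_mul_mk_eq_sub (d := d) h0
  have hgeom := geom_sum_mul (X : ℤ⟦X⟧) d
  rw [mk_ite_eq_zero_eq_X_mul, mk_succ_eq_add_C_mul_X_pow_mul hFr1 hFr2,
    map_sub, map_natCast, map_one]
  refine X_pow_mul_cancel (k := d) ?_
  linear_combination (X * (1 - X - X ^ (d + 1)) * (1 - X)) * hA
    + (X * (1 - X) * (1 + ((r : ℤ⟦X⟧) - 1) * X ^ (2 * d))) * hB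
    + (X * (1 - X - X ^ (d + 1))) * hgeom

theorem genfunc_general (d r : ℕ) (hr : 0 < r) (hrd : r ≤ d) (F : ℤ → ℤ)
    (h0 : ∀ t : ℤ, t ≤ 0 → F t = 1) (h1 : F 1 = 1)
    (hrec : ∀ s : ℤ, 2 ≤ s → F s = F (s - 1) + F (s - d - 1))
    (Fr : ℕ → ℤ)
    (hFr1 : ∀ s : ℕ, 1 ≤ s → s ≤ d → Fr s = F s)
    (hFr2 : ∀ s : ℕ, d + 1 ≤ s → Fr s = F s + ((r : ℤ) - 1) * F ((s : ℤ) - 2 * d)) :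
    (PowerSeries.mk fun s : ℕ => if s = 0 then 0 else Fr s) *
        (1 - PowerSeries.X - PowerSeries.X ^ (d + 1)) * (1 - PowerSeries.X) =
      PowerSeries.X *
        (1 + ((r : PowerSeries ℤ) - 1) * PowerSeries.X ^ d
          - (r : PowerSeries ℤ) * PowerSeries.X ^ (d + 1)) :=
  genfunc_general_general d r F h0 h1 hrec Fr hFr1 hFr2
end

section
/- For any positive integer d, the polynomial f_d(z) = z^{d+1} + z − 1 has a unique positive real root w_d, this root lies in the open interval (0,1), and every other complex root of f_d has modulus strictly greater than w_d. -/
/-!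
On `[0, ∞)` the map `x ↦ x ^ (d + 1) + x` is strictly increasing, which gives the unique positive
root `w`. For a complex root `z` the triangle inequality gives `‖z‖ ^ (d + 1) + ‖z‖ ≥ 1`, hence
`‖z‖ ≥ w`, and equality in the triangle inequality forces `z` to be a nonnegative real, i.e. `z = w`.
-/

open Set

theorem strictMonoOn_pow_add_self (n : ℕ) : StrictMonoOn (fun x : ℝ => x ^ n + x) (Ici 0) :=
  fun _ ha _ _ hab => add_lt_add_of_le_of_lt (pow_le_pow_left₀ ha hab.le n) hab

theorem exists_mem_Ioo_pow_add_self_eq_one {n : ℕ} (hn : n ≠ 0) :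
    ∃ w ∈ Ioo (0 : ℝ) 1, w ^ n + w = 1 := by
  have hcont : ContinuousOn (fun x : ℝ => x ^ n + x) (Icc 0 1) := by fun_prop
  have hone : (1 : ℝ) ∈ Ioo (0 ^ n + 0) (1 ^ n + 1) := by
    rw [zero_pow hn, one_pow]; norm_num
  exact intermediate_value_Ioo zero_le_one hcont hone

namespace Complex

theorem one_le_norm_pow_add_norm {n : ℕ} {z : ℂ} (hz : z ^ n + z = 1) :
    1 ≤ ‖z‖ ^ n + ‖z‖ :=
  calc (1 : ℝ) = ‖z ^ n + z‖ := by rw [hz, norm_one]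
    _ ≤ ‖z‖ ^ n + ‖z‖ := by simpa only [norm_pow] using norm_add_le (z ^ n) z

/-- `z ^ n` and `z` lie on one ray, hence so do their sum `1` and `z`. -/
theorem eq_norm_of_norm_pow_add_norm_eq_one {n : ℕ} {z : ℂ} (hz : z ^ n + z = 1)
    (hnorm : ‖z‖ ^ n + ‖z‖ = 1) : z = ‖z‖ := by
  have hray : SameRay ℝ (z ^ n) z := by
    rw [sameRay_iff_norm_add, hz, norm_one, norm_pow, hnorm]
  have hray_one : SameRay ℝ 1 z := hz ▸ hray.add_left (SameRay.refl z)
  obtain ⟨r, hr, rfl⟩ := hray_one.exists_nonneg_left one_ne_zero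
  simp [Complex.real_smul, abs_of_nonneg hr]

end Complex

theorem fd_smallest_root_general (d : ℕ) :
    ∃ w : ℝ, 0 < w ∧ w < 1 ∧ w ^ (d + 1) + w - 1 = 0 ∧
      (∀ x : ℝ, 0 < x → x ^ (d + 1) + x - 1 = 0 → x = w) ∧
      ∀ z : ℂ, z ^ (d + 1) + z - 1 = 0 → z ≠ (w : ℂ) → w < ‖z‖ := by
  obtain ⟨w, ⟨hw0, hw1⟩, hw⟩ := exists_mem_Ioo_pow_add_self_eq_one (n := d + 1) d.succ_ne_zero
  have hmono := strictMonoOn_pow_add_self (d + 1)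
  refine ⟨w, hw0, hw1, by linarith, fun x hx hx_root => hmono.injOn hx.le hw0.le (by linarith), ?_⟩
  intro z hz_root hzw
  have hz : z ^ (d + 1) + z = 1 := by linear_combination hz_root
  have hle : w ≤ ‖z‖ :=
    (hmono.le_iff_le hw0.le (norm_nonneg z)).1 (hw ▸ Complex.one_le_norm_pow_add_norm hz)
  refine hle.lt_of_ne fun hwz => hzw ?_
  rw [Complex.eq_norm_of_norm_pow_add_norm_eq_one hz (by rw [← hwz, hw]), ← hwz]

theorem fd_smallest_root (d : ℕ) (hd : 0 < d) :
    ∃ w : ℝ, 0 < w ∧ w < 1 ∧ w ^ (d + 1) + w - 1 = 0 ∧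
      (∀ x : ℝ, 0 < x → x ^ (d + 1) + x - 1 = 0 → x = w) ∧
      ∀ z : ℂ, z ^ (d + 1) + z - 1 = 0 → z ≠ (w : ℂ) → w < ‖z‖ :=
  fd_smallest_root_general d
end

section
/- For any positive integer d, the unique positive real root w_d of z^{d+1} + z − 1 satisfies |w_d − (1 − log(d+1)/(d+1))| ≤ C·log(log(d+1)+2)/(d+1) for some absolute constant C and all d ≥ 1. -/
/-!
Write `n = d + 1` and `f z = z ^ n + z`, which is strictly increasing on `[0, ∞)` with `f w = 1`,
so `w` is bracketed by any `b, a ≥ 0` with `f b ≤ 1 ≤ f a`. For `b = 1 - t / n` with `t ≥ log n`,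
`b ^ n ≤ exp (-t) ≤ 1 / n ≤ 1 - b`. For `a = 1 - s / n` with `s ≤ n / 2`,
`a ^ n ≥ exp (-s - 2 s² / n)`, which is at least `s / n = 1 - a` as soon as
`log s + s + 2 s² / n ≤ log n`. Taking `t = log n + 13 L` and `s = log n - 13 L`, where
`L = log (log n + 2)`, gives the claim with `C = 13`.
-/

open Real

lemma pow_add_self_strictMonoOn {R : Type*} [Semiring R] [PartialOrder R] [IsStrictOrderedRing R]
    (n : ℕ) : StrictMonoOn (fun z : R => z ^ n + z) (Set.Ici 0) :=
  fun _ ha _ _ hab => add_lt_add_of_le_of_lt (pow_le_pow_left₀ ha hab.le n) hab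

lemma Real.log_le_div_two {x : ℝ} (hx : 0 < x) : log x ≤ x / 2 := by
  have h := log_le_sub_one_of_pos (div_pos hx (exp_pos 1))
  rw [log_div hx.ne' (exp_pos 1).ne', log_exp] at h
  have he : x / exp 1 ≤ x / 2 :=
    div_le_div_of_nonneg_left hx.le two_pos (by linarith [add_one_le_exp (1 : ℝ)])
  linarith

lemma Real.sq_log_le_four_mul {x : ℝ} (hx : 1 ≤ x) : log x ^ 2 ≤ 4 * x := by
  have h := log_le_rpow_div (x := x) (by linarith) (by norm_num : (0 : ℝ) < 1 / 2)
  rw [← sqrt_eq_rpow] at h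
  nlinarith [log_nonneg hx, sq_sqrt (show 0 ≤ x by linarith)]

lemma Real.neg_sub_two_mul_sq_le_log_one_sub {x : ℝ} (hx : x ≤ 1 / 2) :
    -x - 2 * x ^ 2 ≤ log (1 - x) := by
  have hpos : 0 < 1 - x := by linarith
  have h := one_sub_inv_le_log_of_pos hpos
  have h' : -x - 2 * x ^ 2 ≤ 1 - (1 - x)⁻¹ := by
    rw [← one_div, le_sub_iff_add_le, ← le_sub_iff_add_le', div_le_iff₀ hpos]
    nlinarith
  linarith

lemma Real.exp_neg_sub_le_one_sub_div_pow {n : ℕ} {s : ℝ} (hs : 0 ≤ s) (hsn : 2 * s ≤ n) :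
    exp (-s - 2 * s ^ 2 / n) ≤ (1 - s / n) ^ n := by
  rcases n.eq_zero_or_pos with rfl | hn
  · simp only [CharP.cast_eq_zero, div_zero, sub_zero, pow_zero, exp_le_one_iff]
    linarith
  have hn' : (0 : ℝ) < n := by exact_mod_cast hn
  have hx : s / n ≤ 1 / 2 := by rw [div_le_iff₀ hn']; linarith
  have hlog := neg_sub_two_mul_sq_le_log_one_sub hx
  have hpos : 0 < 1 - s / n := by linarith
  rw [← exp_log (pow_pos hpos n), log_pow, exp_le_exp]
  calc -s - 2 * s ^ 2 / n = n * (-(s / n) - 2 * (s / n) ^ 2) := by field_simp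
    _ ≤ n * log (1 - s / n) := mul_le_mul_of_nonneg_left hlog hn'.le

section Root

variable {n : ℕ} {w : ℝ}

lemma one_sub_div_le_of_pow_add_eq_one (hn : 0 < n) (hw : 0 ≤ w) (hroot : w ^ n + w = 1)
    {t : ℝ} (ht : 1 ≤ t) (hlog : log n ≤ t) : 1 - t / n ≤ w := by
  have hn' : (0 : ℝ) < n := by exact_mod_cast hn
  rcases le_or_gt t n with htn | htn
  · have hb : 0 ≤ 1 - t / n := by rw [sub_nonneg, div_le_one hn']; exact htn
    have hpow : (1 - t / n) ^ n ≤ t / n :=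
      calc (1 - t / n) ^ n ≤ exp (-t) := one_sub_div_pow_le_exp_neg htn
        _ ≤ exp (-log n) := exp_le_exp.mpr (neg_le_neg hlog)
        _ = 1 / n := by rw [exp_neg, exp_log hn', one_div]
        _ ≤ t / n := div_le_div_of_nonneg_right ht hn'.le
    exact ((pow_add_self_strictMonoOn n).le_iff_le hb hw).mp (by linarith)
  · have : 1 < t / n := by rwa [one_lt_div hn']
    linarith

lemma le_one_sub_div_of_pow_add_eq_one (hw : 0 ≤ w) (hroot : w ^ n + w = 1) {s : ℝ} (hs : 0 < s)
    (hsn : 2 * s ≤ n) (hlog : log s + s + 2 * s ^ 2 / n ≤ log n) : w ≤ 1 - s / n := by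
  have hn' : (0 : ℝ) < n := by linarith
  have ha : 0 ≤ 1 - s / n := by
    rw [sub_nonneg, div_le_one hn']; linarith
  have hpow : s / n ≤ (1 - s / n) ^ n :=
    calc s / n = exp (log s - log n) := by rw [exp_sub, exp_log hs, exp_log hn']
      _ ≤ exp (-s - 2 * s ^ 2 / n) := exp_le_exp.mpr (by linarith)
      _ ≤ (1 - s / n) ^ n := exp_neg_sub_le_one_sub_div_pow hs.le hsn
  exact ((pow_add_self_strictMonoOn n).le_iff_le hw ha).mp (by linarith)

end Root

theorem wd_asymptotic :
    ∃ C : ℝ, 0 < C ∧ ∀ d : ℕ, 1 ≤ d → ∀ w : ℝ,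
      0 < w → w < 1 → w ^ (d + 1) + w - 1 = 0 →
      |w - (1 - Real.log (d + 1) / (d + 1))| ≤
        C * Real.log (Real.log (d + 1) + 2) / (d + 1) := by
  refine ⟨13, by norm_num, fun d hd w hw0 hw1 hroot => ?_⟩
  have hN : (2 : ℝ) ≤ d + 1 := by linarith [show (1 : ℝ) ≤ d by exact_mod_cast hd]
  have hcast : ((d + 1 : ℕ) : ℝ) = d + 1 := by push_cast; ring
  have hroot' : w ^ (d + 1) + w = 1 := by linarith
  set ℓ := log (d + 1)
  have hℓ : 0 < ℓ := log_pos (by linarith)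
  have hL : log 2 ≤ log (ℓ + 2) := log_le_log two_pos (by linarith)
  -- `C = 13` is chosen so that `13 log 2 ≥ 1` and `12 log 2 ≥ 8`.
  have hlog2 := log_two_gt_d9
  rw [abs_le]
  constructor
  · have h := one_sub_div_le_of_pow_add_eq_one d.succ_pos hw0.le hroot'
      (t := ℓ + 13 * log (ℓ + 2)) (by linarith) (by rw [hcast]; linarith)
    rw [hcast, add_div] at h
    linarith
  · rcases le_or_gt ℓ (13 * log (ℓ + 2)) with hsmall | hlarge
    · have : ℓ / (d + 1) ≤ 13 * log (ℓ + 2) / (d + 1) := by gcongr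
      linarith
    · set s := ℓ - 13 * log (ℓ + 2)
      have hlogs : log s ≤ log (ℓ + 2) := log_le_log (by linarith) (by linarith)
      have hsq : 2 * s ^ 2 / (d + 1) ≤ 8 := by
        rw [div_le_iff₀ (by linarith)]
        nlinarith [sq_log_le_four_mul (show (1 : ℝ) ≤ d + 1 by linarith)]
      have h := le_one_sub_div_of_pow_add_eq_one hw0.le hroot' (s := s) (by linarith)
        (by rw [hcast]; linarith [log_le_div_two (show (0 : ℝ) < d + 1 by linarith)])
        (by rw [hcast]; linarith)
      rw [hcast, sub_div] at h
      linarith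
end
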